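/- arXiv:2404.18388 — 9 statements merged into one kernel-verified Lean document; each statement's English description precedes it below -/
import Mathlib

section
/- Let ε > 0 and δ ∈ (0,1) satisfy δ·(e^ε + 1) ≤ 1, let μ = 1 − (1/ε)·ln(δ·(e^ε + 1)), and let w : ℤ → ℝ be the positive one-sided Laplace weight w(x) = ((e^ε − 1)/(e^ε + 1))·exp(−ε·|x − μ|). For an input count c ∈ ℤ, define the output measure of the positive one-sided Laplace mechanism by M_c(S) = ∑_{x ∈ ℤ, c + max(0,x) ∈ S} w(x) for S ⊆ ℤ. Then for all integers c, c′ with |c − c′| ≤ 1 and all sets S ⊆ ℤ, M_c(S) ≤ e^ε · M_{c′}(S) + δ. -/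
/-- **(ε, δ)-DP of the positive one-sided Laplace mechanism.**
The mechanism on input count `c` outputs `c + max 0 z` where `z : ℤ` is drawn
with weight `w x = ((e^ε − 1)/(e^ε + 1)) · exp (−ε·|x − μ|)`,
`μ = 1 − (1/ε)·ln (δ·(e^ε + 1))`.  For all neighboring counts `c, c'`
(`|c − c'| ≤ 1`) and output sets `S ⊆ ℤ`, `M c S ≤ e^ε · M c' S + δ`. -/
theorem positive_one_sided_laplace_dp
    (ε δ : ℝ) (hε : 0 < ε) (hδ : δ ∈ Set.Ioo (0 : ℝ) 1)
    (hδε : δ * (Real.exp ε + 1) ≤ 1)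
    (μ : ℝ) (hμ : μ = 1 - (1 / ε) * Real.log (δ * (Real.exp ε + 1)))
    (w : ℤ → ℝ)
    (hw : ∀ x : ℤ, w x =
      ((Real.exp ε - 1) / (Real.exp ε + 1)) * Real.exp (-ε * |(x : ℝ) - μ|))
    (M : ℤ → Set ℤ → ℝ)
    (hM : ∀ (c : ℤ) (S : Set ℤ),
      M c S = ∑' x : ℤ, S.indicator (fun _ => w x) (c + max 0 x))
    (c c' : ℤ) (hcc' : |c - c'| ≤ 1) (S : Set ℤ) :
    M c S ≤ Real.exp ε * M c' S + δ := by
  classical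
  set E := Real.exp ε with hE
  have hE1 : 1 < E := by
    simpa [hE] using Real.exp_lt_exp.mpr hε
  have hE0 : 0 < E := lt_trans one_pos hE1
  set A : ℝ := (E - 1) / (E + 1) with hA
  have hApos : 0 ≤ A := by
    apply div_nonneg <;> linarith
  set q : ℝ := Real.exp (-ε) with hq
  have hq0 : 0 < q := Real.exp_pos _
  have hq1 : q < 1 := by
    rw [hq]
    calc Real.exp (-ε) < Real.exp 0 := Real.exp_lt_exp.mpr (by linarith)
    _ = 1 := Real.exp_zero
  have ht0 : 0 < δ * (E + 1) := by
    have := hδ.1; positivity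
  have hμ1 : 1 ≤ μ := by
    have hlog : Real.log (δ * (E + 1)) ≤ 0 := Real.log_nonpos ht0.le hδε
    have h1ε : 0 ≤ 1 / ε := by positivity
    nlinarith [hμ]
  -- nonnegativity of w
  have hwnn : ∀ x : ℤ, 0 ≤ w x := by
    intro x
    rw [hw x]
    have := Real.exp_nonneg (-ε * |(x : ℝ) - μ|)
    exact mul_nonneg hApos this
  -- ratio bound : if |x - y| ≤ 1 then w x ≤ e^ε * w y
  have hratio : ∀ x y : ℤ, |(x : ℝ) - (y : ℝ)| ≤ 1 → w x ≤ E * w y := by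
    intro x y hxy
    rw [hw x, hw y]
    have h1 : |(y : ℝ) - μ| - |(x : ℝ) - μ| ≤ 1 := by
      have h2 := abs_sub_abs_le_abs_sub ((y : ℝ) - μ) ((x : ℝ) - μ)
      have h3 : ((y : ℝ) - μ) - ((x : ℝ) - μ) = (y : ℝ) - (x : ℝ) := by ring
      rw [h3] at h2
      calc |(y : ℝ) - μ| - |(x : ℝ) - μ| ≤ |(y : ℝ) - (x : ℝ)| := h2
      _ = |(x : ℝ) - (y : ℝ)| := abs_sub_comm _ _
      _ ≤ 1 := hxy
    have h4 : Real.exp (-ε * |(x : ℝ) - μ|) ≤ E * Real.exp (-ε * |(y : ℝ) - μ|) := by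
      rw [hE, ← Real.exp_add]
      apply Real.exp_le_exp.mpr
      nlinarith
    calc A * Real.exp (-ε * |(x : ℝ) - μ|) ≤ A * (E * Real.exp (-ε * |(y : ℝ) - μ|)) :=
          mul_le_mul_of_nonneg_left h4 hApos
    _ = E * (A * Real.exp (-ε * |(y : ℝ) - μ|)) := by ring
  -- generic upper bound on w
  have hwle : ∀ (x : ℤ) (t : ℝ), t ≤ |(x : ℝ) - μ| → w x ≤ A * Real.exp (-ε * t) := by
    intro x t h
    rw [hw x]
    exact mul_le_mul_of_nonneg_left (Real.exp_le_exp.mpr (by nlinarith)) hApos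
  have hexpalg : ∀ (B : ℝ) (n : ℕ),
      A * Real.exp (-ε * ((n : ℝ) - B)) = (A * Real.exp (ε * B)) * q ^ n := by
    intro B n
    rw [show -ε * ((n : ℝ) - B) = ε * B + (n : ℝ) * (-ε) by ring, Real.exp_add,
      Real.exp_nat_mul, hq]
    ring
  have hgeom : ∀ C : ℝ, Summable (fun n : ℕ => C * q ^ n) := fun C =>
    (summable_geometric_of_lt_one hq0.le hq1).mul_left C
  -- exact value of w at nonpositive integers
  have hwneg : ∀ n : ℕ, w (-(n : ℤ)) = (A * Real.exp (ε * (-μ))) * q ^ n := by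
    intro n
    rw [hw]
    have h1 : ((-(n : ℤ) : ℤ) : ℝ) - μ = -((n : ℝ) + μ) := by push_cast; ring
    have hnn : (0 : ℝ) ≤ (n : ℝ) + μ := by
      have := Nat.cast_nonneg (α := ℝ) n; linarith
    rw [h1, abs_neg, abs_of_nonneg hnn,
      show -ε * ((n : ℝ) + μ) = ε * (-μ) + (n : ℝ) * (-ε) by ring,
      Real.exp_add, Real.exp_nat_mul, hq]
    ring
  -- summability facts about w
  have s_negnat : Summable (fun n : ℕ => w (-(n : ℤ))) := by
    apply Summable.congr (hgeom (A * Real.exp (ε * (-μ))))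
    intro n
    exact (hwneg n).symm
  have s_nat : Summable (fun n : ℕ => w (n : ℤ)) := by
    apply Summable.of_nonneg_of_le (fun n => hwnn _) (fun n => ?_) (hgeom (A * Real.exp (ε * μ)))
    rw [← hexpalg μ n]
    apply hwle
    push_cast
    exact le_abs_self _
  have s_negnat' : Summable (fun n : ℕ => w (-((n : ℤ) + 1))) := by
    apply Summable.of_nonneg_of_le (fun n => hwnn _) (fun n => ?_)
      (hgeom (A * Real.exp (ε * (-(1 + μ)))))
    rw [← hexpalg (-(1 + μ)) n]
    apply hwle
    push_cast
    calc (n : ℝ) - -(1 + μ) = -(-((n : ℝ) + 1) - μ) := by ring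
    _ ≤ |(-((n : ℝ) + 1)) - μ| := neg_le_abs _
  have s_natadd : Summable (fun n : ℕ => w ((n : ℤ) + 1)) := by
    apply Summable.of_nonneg_of_le (fun n => hwnn _) (fun n => ?_)
      (hgeom (A * Real.exp (ε * (μ - 1))))
    rw [← hexpalg (μ - 1) n]
    apply hwle
    push_cast
    calc (n : ℝ) - (μ - 1) = ((n : ℝ) + 1) - μ := by ring
    _ ≤ |((n : ℝ) + 1) - μ| := le_abs_self _
  have sw : Summable w := Summable.of_nat_of_neg_add_one s_nat s_negnat'
  -- indicator functions
  have hInn : ∀ (c₀ : ℤ) (x : ℤ), 0 ≤ S.indicator (fun _ => w x) (c₀ + max 0 x) := by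
    intro c₀ x
    exact Set.indicator_nonneg (fun _ _ => hwnn x) _
  have hIle : ∀ (c₀ : ℤ) (x : ℤ), S.indicator (fun _ => w x) (c₀ + max 0 x) ≤ w x := by
    intro c₀ x
    by_cases h : c₀ + max 0 x ∈ S
    · rw [Set.indicator_of_mem h]
    · rw [Set.indicator_of_notMem h]; exact hwnn x
  have sG : Summable (fun x : ℤ => S.indicator (fun _ => w x) (c' + max 0 x)) :=
    Summable.of_nonneg_of_le (hInn c') (hIle c') sw
  have sF1 : Summable (fun n : ℕ => S.indicator (fun _ => w (-(n : ℤ))) (c + max 0 (-(n : ℤ)))) :=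
    Summable.of_nonneg_of_le (fun n => hInn c _) (fun n => hIle c _) s_negnat
  have sF2 : Summable (fun n : ℕ =>
      S.indicator (fun _ => w ((n : ℤ) + 1)) (c + max 0 ((n : ℤ) + 1))) :=
    Summable.of_nonneg_of_le (fun n => hInn c _) (fun n => hIle c _) s_natadd
  -- split the sum for M c S
  have hsplit : M c S =
      (∑' n : ℕ, S.indicator (fun _ => w (-(n : ℤ))) (c + max 0 (-(n : ℤ)))) +
      (∑' n : ℕ, S.indicator (fun _ => w ((n : ℤ) + 1)) (c + max 0 ((n : ℤ) + 1))) := by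
    have hnegsum := (Equiv.neg ℤ).tsum_eq (fun x : ℤ => S.indicator (fun _ => w x) (c + max 0 x))
    simp only [Equiv.neg_apply] at hnegsum
    have hint := tsum_of_nat_of_neg_add_one
      (f := fun x : ℤ => S.indicator (fun _ => w (-x)) (c + max 0 (-x)))
      (by exact sF1) (by simpa using sF2)
    rw [hM c S, ← hnegsum, hint]
    simp
  -- first part is at most δ
  have hpart1 : (∑' n : ℕ, S.indicator (fun _ => w (-(n : ℤ))) (c + max 0 (-(n : ℤ)))) ≤ δ := by
    have h1 : (∑' n : ℕ, S.indicator (fun _ => w (-(n : ℤ))) (c + max 0 (-(n : ℤ)))) ≤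
        ∑' n : ℕ, w (-(n : ℤ)) :=
      Summable.tsum_le_tsum (fun n => hIle c _) sF1 s_negnat
    have h2 : (∑' n : ℕ, w (-(n : ℤ))) = (A * Real.exp (ε * (-μ))) * (1 - q)⁻¹ := by
      rw [tsum_congr hwneg, tsum_mul_left, tsum_geometric_of_lt_one hq0.le hq1]
    have hexpμ : Real.exp (ε * (-μ)) = q * (δ * (E + 1)) := by
      have h3 : ε * (-μ) = -ε + Real.log (δ * (E + 1)) := by
        rw [hμ]; field_simp; ring
      rw [h3, Real.exp_add, Real.exp_log ht0, hq]
    have hq' : 1 - q ≠ 0 := by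
      have : q < 1 := hq1; linarith
    have hqE : q = E⁻¹ := by rw [hq, hE, Real.exp_neg]
    have h4 : (A * Real.exp (ε * (-μ))) * (1 - q)⁻¹ = δ := by
      rw [hexpμ, hA, hqE]
      have hE0' : E ≠ 0 := ne_of_gt hE0
      have hE1' : E + 1 ≠ 0 := by linarith
      have hEm1 : E - 1 ≠ 0 := by linarith
      rw [show (1 : ℝ) - E⁻¹ = (E - 1) / E by field_simp, inv_div]
      field_simp
    calc _ ≤ ∑' n : ℕ, w (-(n : ℤ)) := h1
    _ = (A * Real.exp (ε * (-μ))) * (1 - q)⁻¹ := h2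
    _ = δ := h4
  -- second part is at most e^ε * M c' S
  have hd := abs_le.mp hcc'
  have einj : Function.Injective (fun n : ℕ => (n : ℤ) + 1 + (c - c')) := by
    intro a b h
    simp only at h
    omega
  have key : ∀ n : ℕ, S.indicator (fun _ => w ((n : ℤ) + 1)) (c + max 0 ((n : ℤ) + 1)) ≤
      E * S.indicator (fun _ => w ((n : ℤ) + 1 + (c - c')))
        (c' + max 0 ((n : ℤ) + 1 + (c - c'))) := by
    intro n
    have hmax1 : max 0 ((n : ℤ) + 1) = (n : ℤ) + 1 := max_eq_right (by omega)
    have hmax2 : max 0 ((n : ℤ) + 1 + (c - c')) = (n : ℤ) + 1 + (c - c') :=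
      max_eq_right (by omega)
    have hpt : c + max 0 ((n : ℤ) + 1) = c' + max 0 ((n : ℤ) + 1 + (c - c')) := by
      rw [hmax1, hmax2]; ring
    by_cases hS : c + max 0 ((n : ℤ) + 1) ∈ S
    · rw [Set.indicator_of_mem hS, Set.indicator_of_mem (hpt ▸ hS)]
      apply hratio
      push_cast
      rw [show ((n : ℝ) + 1) - ((n : ℝ) + 1 + ((c : ℝ) - (c' : ℝ))) = -((c : ℝ) - (c' : ℝ)) by
        ring, abs_neg]
      have : |((c : ℤ) - c' : ℤ)| ≤ 1 := hcc'
      calc |((c : ℝ) - (c' : ℝ))| = ((|c - c'| : ℤ) : ℝ) := by push_cast [abs_sub_comm]; simp [abs_sub_comm]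
      _ ≤ 1 := by exact_mod_cast this
    · rw [Set.indicator_of_notMem hS, Set.indicator_of_notMem (hpt ▸ hS)]
      simp
  have sGe : Summable (fun n : ℕ =>
      S.indicator (fun _ => w ((n : ℤ) + 1 + (c - c')))
        (c' + max 0 ((n : ℤ) + 1 + (c - c')))) := by
    have := sG.comp_injective einj
    exact this
  have hpart2 : (∑' n : ℕ, S.indicator (fun _ => w ((n : ℤ) + 1)) (c + max 0 ((n : ℤ) + 1))) ≤
      E * M c' S := by
    rw [hM c' S]
    calc (∑' n : ℕ, S.indicator (fun _ => w ((n : ℤ) + 1)) (c + max 0 ((n : ℤ) + 1)))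
        ≤ ∑' n : ℕ, E * S.indicator (fun _ => w ((n : ℤ) + 1 + (c - c')))
            (c' + max 0 ((n : ℤ) + 1 + (c - c'))) :=
          Summable.tsum_le_tsum key sF2 (sGe.mul_left E)
    _ = E * ∑' n : ℕ, S.indicator (fun _ => w ((n : ℤ) + 1 + (c - c')))
            (c' + max 0 ((n : ℤ) + 1 + (c - c'))) := tsum_mul_left
    _ ≤ E * ∑' x : ℤ, S.indicator (fun _ => w x) (c' + max 0 x) := by
          apply mul_le_mul_of_nonneg_left _ hE0.le
          exact Summable.tsum_le_tsum_of_inj (fun n : ℕ => (n : ℤ) + 1 + (c - c')) einj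
            (fun x _ => hInn c' x) (fun n => le_rfl) sGe sG
  linarith [hsplit, hpart1, hpart2]
end

section
/- Let ε > 0 and δ > 0 satisfy δ·(e^ε + 1) ≤ 1, and let μ = 1 − (1/ε)·ln(δ·(e^ε + 1)) (so μ ≥ 1). Then ∑_{x ∈ ℤ, x ≤ 0} ((e^ε − 1)/(e^ε + 1))·exp(−ε·(μ − x)) = δ. -/
/-- Equivalence between ℕ and nonpositive integers. -/
def negEquiv : ℕ ≃ {x : ℤ // x ≤ 0} where
  toFun n := ⟨-(n : ℤ), by simp⟩
  invFun x := (-x.1).toNat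
  left_inv n := by simp
  right_inv x := by
    rcases x with ⟨x, hx⟩
    simp only [Subtype.mk.injEq]
    omega

/-- **The truncated mass of the positive one-sided Laplace weight equals δ.**
With `μ = 1 − (1/ε)·ln (δ·(e^ε + 1)) ≥ 1`, the total weight
`∑_{x ≤ 0} ((e^ε − 1)/(e^ε + 1))·exp (−ε·(μ − x))` of the nonpositive
integers is exactly `δ`. -/
theorem positive_one_sided_laplace_tail_mass
    (ε δ : ℝ) (hε : 0 < ε) (hδ : 0 < δ)
    (hδε : δ * (Real.exp ε + 1) ≤ 1)
    (μ : ℝ) (hμ : μ = 1 - (1 / ε) * Real.log (δ * (Real.exp ε + 1))) :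
    (∑' x : {x : ℤ // x ≤ 0},
        ((Real.exp ε - 1) / (Real.exp ε + 1)) * Real.exp (-ε * (μ - ((x : ℤ) : ℝ)))) = δ := by
  have h1 : (0:ℝ) < Real.exp ε + 1 := by positivity
  have hpos : 0 < δ * (Real.exp ε + 1) := by positivity
  -- reindex by ℕ
  rw [← Equiv.tsum_eq negEquiv]
  have hfun : ∀ n : ℕ,
      ((Real.exp ε - 1) / (Real.exp ε + 1)) *
        Real.exp (-ε * (μ - (((negEquiv n : {x : ℤ // x ≤ 0}) : ℤ) : ℝ)))
      = (((Real.exp ε - 1) / (Real.exp ε + 1)) * Real.exp (-ε * μ)) *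
          (Real.exp (-ε)) ^ n := by
    intro n
    have : ((((negEquiv n : {x : ℤ // x ≤ 0}) : ℤ)) : ℝ) = -(n : ℝ) := by
      simp [negEquiv]
    rw [this, ← Real.exp_nat_mul]
    rw [mul_assoc, ← Real.exp_add]
    ring_nf
  rw [tsum_congr hfun]
  have hr : Real.exp (-ε) < 1 := by
    rw [Real.exp_lt_one_iff]; linarith
  have hr0 : 0 < Real.exp (-ε) := Real.exp_pos _
  rw [tsum_mul_left, tsum_geometric_of_lt_one hr0.le hr]
  -- now algebra
  have hεμ : Real.exp (-ε * μ) = Real.exp (-ε) * (δ * (Real.exp ε + 1)) := by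
    rw [hμ]
    have : -ε * (1 - 1 / ε * Real.log (δ * (Real.exp ε + 1)))
        = -ε + Real.log (δ * (Real.exp ε + 1)) := by
      field_simp
      ring
    rw [this, Real.exp_add, Real.exp_log hpos]
  rw [hεμ]
  have h2 : 1 - Real.exp (-ε) = Real.exp (-ε) * (Real.exp ε - 1) := by
    rw [mul_sub, ← Real.exp_add]
    simp
  rw [h2]
  have he1 : 0 < Real.exp ε - 1 := by
    linarith [Real.add_one_le_exp ε]
  field_simp
end

section
/- Let ε > 0 and δ ∈ (0,1) satisfy δ·(e^ε + 1) ≤ 1, let μ = 1 − (1/ε)·ln(δ·(e^ε + 1)), and let w(x) = ((e^ε − 1)/(e^ε + 1))·exp(−ε·|x − μ|) for x ∈ ℤ. For a histogram n : Fin m → ℤ, define the noisy-histogram mechanism whose output measure on a set S ⊆ (Fin m → ℤ) is H_n(S) = ∑_{z : Fin m → ℤ, (n + max(0,z)) ∈ S} ∏_{i} w(z_i), where (n + max(0,z))_i = n_i + max(0, z_i). Then for any two histograms n, n′ : Fin m → ℤ that agree on all coordinates except one coordinate j where |n_j − n′_j| = 1, and for any S ⊆ (Fin m → ℤ), H_n(S)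 ≤ e^ε · H_{n′}(S) + δ. -/
/-!
Split the noise vectors `z` by the sign of `z j`. Those with `z j ≤ 0` carry weight at most
`∑_{y ≤ 0} w y` times `1` for each other coordinate (the total mass of `w` is at most `1`), and
the choice of `μ` makes `∑_{y ≤ 0} w y = δ` exactly. When `z j > 0` the truncation at `0` is
inactive in bin `j`, so shifting `z j` by `n j - n' j` yields noise that produces the same output
from `n'`; as `w` changes by a factor at most `e^ε` between neighbouring integers, this part is at
most `e^ε · H n' S`. All sums are taken in `ℝ≥0∞`, where they need no summability side conditions.
-/

open Real Set
open scoped ENNReal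

theorem ENNReal.tsum_fin_pi_prod : ∀ (m : ℕ) {α : Type*} (f : Fin m → α → ℝ≥0∞),
    ∑' z : Fin m → α, ∏ i, f i (z i) = ∏ i, ∑' a, f i a
  | 0, α, f => by
    simp only [Finset.univ_eq_empty, Finset.prod_empty]
    exact tsum_eq_single (fun i => i.elim0) fun z hz => absurd (Subsingleton.elim z _) hz
  | m + 1, α, f => by
    rw [← (Fin.consEquiv fun _ => α).tsum_eq, ENNReal.tsum_prod', Fin.prod_univ_succ,
      ← ENNReal.tsum_fin_pi_prod m, ← ENNReal.tsum_mul_right]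
    refine tsum_congr fun a => ?_
    rw [← ENNReal.tsum_mul_left]
    refine tsum_congr fun z => ?_
    simp [Fin.consEquiv, Fin.prod_univ_succ]

theorem ENNReal.tsum_pi_prod {ι α : Type*} [Fintype ι] (f : ι → α → ℝ≥0∞) :
    ∑' z : ι → α, ∏ i, f i (z i) = ∏ i, ∑' a, f i a := by
  let e := Fintype.equivFin ι
  rw [← (e.arrowCongr (Equiv.refl α)).symm.tsum_eq, ← e.symm.prod_comp,
    ← ENNReal.tsum_fin_pi_prod]
  refine tsum_congr fun z => ?_
  rw [← e.symm.prod_comp]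
  simp

theorem Fintype.prod_le_mul_prod_of_eq_of_ne {ι M : Type*} [Fintype ι] [DecidableEq ι]
    [CommMonoid M] [Preorder M] [MulRightMono M] {f g : ι → M} {K : M} (j : ι)
    (hj : f j ≤ K * g j) (h : ∀ i ≠ j, f i = g i) : ∏ i, f i ≤ K * ∏ i, g i := by
  rw [Fintype.prod_eq_mul_prod_compl j f, Fintype.prod_eq_mul_prod_compl j g, ← mul_assoc,
    Finset.prod_congr rfl fun i hi => h i (by simpa using hi)]
  exact mul_le_mul_left hj _

theorem tsum_indicator_Iic_eq_tsum_sub_natCast {M : Type*} [AddCommMonoid M]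
    [TopologicalSpace M] (f : ℤ → M) (k : ℤ) :
    ∑' y, (Iic k).indicator f y = ∑' n : ℕ, f (k - n) := by
  rw [← (show Function.Injective fun n : ℕ => k - n by intro a b h; simpa using h).tsum_eq]
  · exact tsum_congr fun n => indicator_of_mem (by simp) f
  · exact support_indicator_subset.trans fun y (hy : y ≤ k) => ⟨(k - y).toNat, by simp; omega⟩

theorem tsum_indicator_Ioi_eq_tsum_add_natCast {M : Type*} [AddCommMonoid M]
    [TopologicalSpace M] (f : ℤ → M) (k : ℤ) :
    ∑' y, (Ioi k).indicator f y = ∑' n : ℕ, f (k + 1 + n) := by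
  rw [← (show Function.Injective fun n : ℕ => k + 1 + n by intro a b h; simpa using h).tsum_eq]
  · exact tsum_congr fun n => indicator_of_mem (by simp; omega) f
  · exact support_indicator_subset.trans fun y (hy : k < y) =>
      ⟨(y - k - 1).toNat, by simp; omega⟩

theorem tsum_ofReal_mul_geometric {a r : ℝ} (ha : 0 ≤ a) (hr₀ : 0 ≤ r) (hr₁ : r < 1) :
    ∑' n : ℕ, ENNReal.ofReal (a * r ^ n) = ENNReal.ofReal (a / (1 - r)) := by
  rw [← ENNReal.ofReal_tsum_of_nonneg (fun n => by positivity)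
    ((summable_geometric_of_lt_one hr₀ hr₁).mul_left a), tsum_mul_left,
    tsum_geometric_of_lt_one hr₀ hr₁, div_eq_mul_inv]

theorem exp_sub_one_div_exp_add_one (ε : ℝ) :
    (exp ε - 1) / (exp ε + 1) = (1 - exp (-ε)) / (1 + exp (-ε)) := by
  rw [exp_neg]
  field_simp

noncomputable def laplaceWeight (ε μ : ℝ) (x : ℤ) : ℝ :=
  (exp ε - 1) / (exp ε + 1) * exp (-ε * |x - μ|)

section LaplaceWeight

variable {ε μ : ℝ}

theorem laplaceWeight_nonneg (hε : 0 ≤ ε) (x : ℤ) : 0 ≤ laplaceWeight ε μ x :=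
  mul_nonneg (div_nonneg (by linarith [one_le_exp hε]) (by positivity)) (exp_nonneg _)

theorem laplaceWeight_le_exp_mul (hε : 0 ≤ ε) {a b : ℤ} (hab : |a - b| ≤ 1) :
    laplaceWeight ε μ a ≤ exp ε * laplaceWeight ε μ b := by
  have hab' : |(b : ℝ) - a| ≤ 1 := by rw [abs_sub_comm]; exact_mod_cast hab
  have htri : |(b : ℝ) - μ| ≤ |(b : ℝ) - a| + |(a : ℝ) - μ| := abs_sub_le _ _ _
  rw [laplaceWeight, laplaceWeight, mul_left_comm, ← exp_add]
  refine mul_le_mul_of_nonneg_left (exp_le_exp.2 ?_)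
    (div_nonneg (by linarith [one_le_exp hε]) (by positivity))
  nlinarith

theorem laplaceWeight_sub_natCast {k : ℤ} (hk : (k : ℝ) ≤ μ) (n : ℕ) :
    laplaceWeight ε μ (k - n) =
      (exp ε - 1) / (exp ε + 1) * exp (-ε * (μ - k)) * exp (-ε) ^ n := by
  rw [laplaceWeight, mul_assoc, ← exp_nat_mul, ← exp_add, Int.cast_sub, Int.cast_natCast,
    abs_of_nonpos (by linarith [n.cast_nonneg (α := ℝ)])]
  ring_nf

theorem laplaceWeight_add_natCast {k : ℤ} (hk : μ ≤ k) (n : ℕ) :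
    laplaceWeight ε μ (k + n) =
      (exp ε - 1) / (exp ε + 1) * exp (-ε * (k - μ)) * exp (-ε) ^ n := by
  rw [laplaceWeight, mul_assoc, ← exp_nat_mul, ← exp_add, Int.cast_add, Int.cast_natCast,
    abs_of_nonneg (by linarith [n.cast_nonneg (α := ℝ)])]
  ring_nf

theorem tsum_indicator_Iic_laplaceWeight (hε : 0 < ε) {k : ℤ} (hk : (k : ℝ) ≤ μ) :
    ∑' y, (Iic k).indicator (ENNReal.ofReal ∘ laplaceWeight ε μ) y =
      ENNReal.ofReal (exp (-ε * (μ - k)) / (1 + exp (-ε))) := by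
  have hr : exp (-ε) < 1 := exp_lt_one_iff.2 (by linarith)
  have hr' : 1 - exp (-ε) ≠ 0 := (sub_pos.2 hr).ne'
  simp only [tsum_indicator_Iic_eq_tsum_sub_natCast, Function.comp_apply,
    laplaceWeight_sub_natCast hk, exp_sub_one_div_exp_add_one]
  rw [tsum_ofReal_mul_geometric (by have := sub_pos.2 hr; positivity) (exp_nonneg _) hr]
  field_simp

theorem tsum_indicator_Ioi_laplaceWeight (hε : 0 < ε) {k : ℤ} (hk : μ ≤ k + 1) :
    ∑' y, (Ioi k).indicator (ENNReal.ofReal ∘ laplaceWeight ε μ) y =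
      ENNReal.ofReal (exp (-ε * (k + 1 - μ)) / (1 + exp (-ε))) := by
  have hr : exp (-ε) < 1 := exp_lt_one_iff.2 (by linarith)
  have hr' : 1 - exp (-ε) ≠ 0 := (sub_pos.2 hr).ne'
  have hk' : μ ≤ ((k + 1 : ℤ) : ℝ) := by push_cast; exact hk
  simp only [tsum_indicator_Ioi_eq_tsum_add_natCast, Function.comp_apply,
    laplaceWeight_add_natCast hk', exp_sub_one_div_exp_add_one]
  rw [tsum_ofReal_mul_geometric (by have := sub_pos.2 hr; positivity) (exp_nonneg _) hr]
  field_simp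
  push_cast
  ring_nf

theorem tsum_laplaceWeight_le_one (hε : 0 < ε) :
    ∑' y, ENNReal.ofReal (laplaceWeight ε μ y) ≤ 1 := by
  set k := ⌊μ⌋
  have hsplit (y : ℤ) : ENNReal.ofReal (laplaceWeight ε μ y) =
      (Iic k).indicator (ENNReal.ofReal ∘ laplaceWeight ε μ) y +
        (Ioi k).indicator (ENNReal.ofReal ∘ laplaceWeight ε μ) y := by
    rw [← compl_Iic, indicator_self_add_compl_apply, Function.comp_apply]
  have hA : exp (-ε * (μ - k)) ≤ 1 := exp_le_one_iff.2 (by nlinarith [Int.floor_le μ])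
  have hB : exp (-ε * (k + 1 - μ)) ≤ 1 :=
    exp_le_one_iff.2 (by nlinarith [Int.lt_floor_add_one μ])
  have hAB : exp (-ε * (μ - k)) * exp (-ε * (k + 1 - μ)) = exp (-ε) := by
    rw [← exp_add]; ring_nf
  rw [tsum_congr hsplit, ENNReal.tsum_add, tsum_indicator_Iic_laplaceWeight hε (Int.floor_le μ),
    tsum_indicator_Ioi_laplaceWeight hε (Int.lt_floor_add_one μ).le,
    ← ENNReal.ofReal_add (by positivity) (by positivity), ENNReal.ofReal_le_one, ← add_div,
    div_le_one (by positivity)]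
  -- `A + B ≤ 1 + A * B` is `(1 - A) * (1 - B) ≥ 0`.
  nlinarith [mul_nonneg (sub_nonneg.2 hA) (sub_nonneg.2 hB)]

theorem tsum_indicator_Iic_zero_laplaceWeight {δ : ℝ} (hε : 0 < ε) (hδ : 0 < δ)
    (hδε : δ * (exp ε + 1) ≤ 1) (hμ : μ = 1 - (1 / ε) * log (δ * (exp ε + 1))) :
    ∑' y, (Iic 0).indicator (ENNReal.ofReal ∘ laplaceWeight ε μ) y = ENNReal.ofReal δ := by
  have hpos : 0 < δ * (exp ε + 1) := by positivity
  have hμ₀ : 0 ≤ μ := by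
    have := mul_nonpos_of_nonneg_of_nonpos (one_div_nonneg.2 hε.le) (log_nonpos hpos.le hδε)
    rw [hμ]
    linarith
  have hexp : exp (-ε * μ) = δ * (1 + exp (-ε)) := by
    rw [hμ, show -ε * (1 - 1 / ε * log (δ * (exp ε + 1))) = -ε + log (δ * (exp ε + 1)) by
      field_simp; ring, exp_add, exp_log hpos, exp_neg]
    field_simp
  rw [tsum_indicator_Iic_laplaceWeight hε (by simpa using hμ₀), Int.cast_zero, sub_zero, hexp]
  congr 1
  field_simp

end LaplaceWeight

section NoisyHistogram

variable {ι : Type*} [Fintype ι] (W : ℤ → ℝ≥0∞)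

noncomputable def noisyHistogramTerm (n : ι → ℤ) (S : Set (ι → ℤ)) (z : ι → ℤ) : ℝ≥0∞ :=
  S.indicator (fun _ => ∏ i, W (z i)) (fun i => n i + max 0 (z i))

noncomputable def noisyHistogram (n : ι → ℤ) (S : Set (ι → ℤ)) : ℝ≥0∞ :=
  ∑' z, noisyHistogramTerm W n S z

variable {W}

theorem noisyHistogramTerm_le_prod (n : ι → ℤ) (S : Set (ι → ℤ)) (z : ι → ℤ) :
    noisyHistogramTerm W n S z ≤ ∏ i, W (z i) :=
  indicator_le_self' (fun _ _ => zero_le) _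

theorem noisyHistogram_le_one (hW : ∑' y, W y ≤ 1) (n : ι → ℤ) (S : Set (ι → ℤ)) :
    noisyHistogram W n S ≤ 1 :=
  calc noisyHistogram W n S ≤ ∑' z : ι → ℤ, ∏ i, W (z i) :=
        ENNReal.tsum_le_tsum (noisyHistogramTerm_le_prod n S)
    _ = ∏ _i : ι, ∑' y, W y := ENNReal.tsum_pi_prod _
    _ ≤ 1 := Finset.prod_le_one' fun _ _ => hW

theorem toReal_noisyHistogram_ofReal {w : ℤ → ℝ} (hw : ∀ x, 0 ≤ w x) (n : ι → ℤ)
    (S : Set (ι → ℤ)) :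
    (noisyHistogram (ENNReal.ofReal ∘ w) n S).toReal =
      ∑' z : ι → ℤ, S.indicator (fun _ => ∏ i, w (z i)) (fun i => n i + max 0 (z i)) := by
  rw [noisyHistogram, ENNReal.tsum_toReal_eq fun z => ne_top_of_le_ne_top
    (by simp [ENNReal.prod_ne_top]) (noisyHistogramTerm_le_prod n S z)]
  refine tsum_congr fun z => ?_
  rw [noisyHistogramTerm, ← Function.comp_apply (f := ENNReal.toReal),
    ← indicator_comp_of_zero ENNReal.toReal_zero]
  congr 1
  ext
  simp [ENNReal.toReal_prod, ENNReal.toReal_ofReal (hw _)]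

variable [DecidableEq ι]

theorem tsum_indicator_nonpos_prod_le {D : ℝ≥0∞} (hW : ∑' y, W y ≤ 1)
    (hD : ∑' y, (Iic 0).indicator W y ≤ D) (j : ι) :
    ∑' z : ι → ℤ, {z | z j ≤ 0}.indicator (fun z => ∏ i, W (z i)) z ≤ D := by
  set V : ι → ℤ → ℝ≥0∞ := Function.update (fun _ => W) j ((Iic 0).indicator W)
  have hle (z : ι → ℤ) :
      {z | z j ≤ 0}.indicator (fun z => ∏ i, W (z i)) z ≤ ∏ i, V i (z i) := by
    by_cases hz : z j ≤ 0
    · refine (indicator_le_self' (fun _ _ => zero_le) z).trans_eq (Finset.prod_congr rfl ?_)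
      intro i _
      rcases eq_or_ne i j with rfl | hi
      · simp [V, hz]
      · simp [V, hi]
    · simp [hz]
  calc _ ≤ ∑' z : ι → ℤ, ∏ i, V i (z i) := ENNReal.tsum_le_tsum hle
    _ = ∏ i, ∑' y, V i y := ENNReal.tsum_pi_prod V
    _ ≤ ∏ i, Function.update (fun _ => 1) j D i := by
        gcongr with i
        rcases eq_or_ne i j with rfl | hi
        · simpa [V] using hD
        · simpa [V, hi] using hW
    _ = D := by simp [Finset.prod_update_of_mem]

theorem tsum_indicator_pos_noisyHistogramTerm_le {K : ℝ≥0∞}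
    (hK : ∀ a b : ℤ, |a - b| = 1 → W a ≤ K * W b) {n n' : ι → ℤ} {j : ι}
    (hagree : ∀ i, i ≠ j → n i = n' i) (hj : |n j - n' j| = 1) (S : Set (ι → ℤ)) :
    ∑' z, {z : ι → ℤ | 0 < z j}.indicator (noisyHistogramTerm W n S) z ≤
      K * noisyHistogram W n' S := by
  have hs : n j - n' j = 1 ∨ n j - n' j = -1 := abs_eq zero_le_one |>.1 hj
  rw [noisyHistogram, ← (Equiv.addRight (Pi.single j (n j - n' j) : ι → ℤ)).tsum_eq
    (noisyHistogramTerm W n' S), ← ENNReal.tsum_mul_left]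
  refine ENNReal.tsum_le_tsum fun z => ?_
  by_cases hz : 0 < z j
  swap
  · simp [hz]
  have hout : (fun i => n i + max 0 (z i)) =
      fun i => n' i + max 0 ((z + (Pi.single j (n j - n' j) : ι → ℤ)) i) := by
    funext i
    rcases eq_or_ne i j with rfl | hi
    · simp only [Pi.add_apply, Pi.single_eq_same]
      omega
    · simp [hi, hagree i hi]
  rw [indicator_of_mem (show z ∈ {z : ι → ℤ | 0 < z j} from hz), Equiv.coe_addRight,
    noisyHistogramTerm, noisyHistogramTerm, hout]
  by_cases hS : (fun i => n' i + max 0 ((z + (Pi.single j (n j - n' j) : ι → ℤ)) i)) ∈ S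
  swap
  · simp only [indicator_of_notMem hS, zero_le]
  simp only [indicator_of_mem hS]
  refine Fintype.prod_le_mul_prod_of_eq_of_ne j (hK _ _ ?_) fun i hi => by simp [hi]
  simpa [abs_sub_comm] using hj

theorem noisyHistogram_le_mul_add {K D : ℝ≥0∞} (hW : ∑' y, W y ≤ 1)
    (hD : ∑' y, (Iic 0).indicator W y ≤ D) (hK : ∀ a b : ℤ, |a - b| = 1 → W a ≤ K * W b)
    {n n' : ι → ℤ} {j : ι} (hagree : ∀ i, i ≠ j → n i = n' i) (hj : |n j - n' j| = 1)
    (S : Set (ι → ℤ)) :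
    noisyHistogram W n S ≤ K * noisyHistogram W n' S + D := by
  have hsplit (z : ι → ℤ) : noisyHistogramTerm W n S z =
      {z : ι → ℤ | 0 < z j}.indicator (noisyHistogramTerm W n S) z +
        {z : ι → ℤ | z j ≤ 0}.indicator (noisyHistogramTerm W n S) z := by
    rw [← indicator_self_add_compl_apply {z : ι → ℤ | 0 < z j} (noisyHistogramTerm W n S) z]
    congr 2
    ext
    simp
  rw [noisyHistogram, tsum_congr hsplit, ENNReal.tsum_add]
  gcongr
  · exact tsum_indicator_pos_noisyHistogramTerm_le hK hagree hj S
  · refine (ENNReal.tsum_le_tsum fun z => ?_).trans (tsum_indicator_nonpos_prod_le hW hD j)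
    exact indicator_le_indicator (noisyHistogramTerm_le_prod n S z)

end NoisyHistogram

/-- **(ε, δ)-DP of the noisy-histogram mechanism with positive one-sided
Laplace noise.**  Independent noise `max 0 (z i)` with weight `w` is added to
every bin; for histograms `n, n'` differing by `1` in exactly one bin `j`,
`H n S ≤ e^ε · H n' S + δ` for every output set `S`. -/
theorem noisy_histogram_dp
    (ε δ : ℝ) (hε : 0 < ε) (hδ : δ ∈ Set.Ioo (0 : ℝ) 1)
    (hδε : δ * (Real.exp ε + 1) ≤ 1)
    (μ : ℝ) (hμ : μ = 1 - (1 / ε) * Real.log (δ * (Real.exp ε + 1)))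
    (w : ℤ → ℝ)
    (hw : ∀ x : ℤ, w x =
      ((Real.exp ε - 1) / (Real.exp ε + 1)) * Real.exp (-ε * |(x : ℝ) - μ|))
    (m : ℕ)
    (H : (Fin m → ℤ) → Set (Fin m → ℤ) → ℝ)
    (hH : ∀ (n : Fin m → ℤ) (S : Set (Fin m → ℤ)),
      H n S = ∑' z : Fin m → ℤ,
        S.indicator (fun _ => ∏ i, w (z i)) (fun i => n i + max 0 (z i)))
    (n n' : Fin m → ℤ) (j : Fin m)
    (hagree : ∀ i, i ≠ j → n i = n' i) (hj : |n j - n' j| = 1)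
    (S : Set (Fin m → ℤ)) :
    H n S ≤ Real.exp ε * H n' S + δ := by
  obtain rfl : w = laplaceWeight ε μ := funext hw
  have hW : ∑' y, ENNReal.ofReal (laplaceWeight ε μ y) ≤ 1 := tsum_laplaceWeight_le_one hε
  have hK (a b : ℤ) (hab : |a - b| = 1) : (ENNReal.ofReal ∘ laplaceWeight ε μ) a ≤
      ENNReal.ofReal (exp ε) * (ENNReal.ofReal ∘ laplaceWeight ε μ) b := by
    rw [Function.comp_apply, Function.comp_apply, ← ENNReal.ofReal_mul (exp_nonneg ε)]
    exact ENNReal.ofReal_le_ofReal (laplaceWeight_le_exp_mul hε.le hab.le)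
  have hmech := noisyHistogram_le_mul_add (W := ENNReal.ofReal ∘ laplaceWeight ε μ) hW
    (tsum_indicator_Iic_zero_laplaceWeight hε hδ.1 hδε hμ).le hK hagree hj S
  have hfin : noisyHistogram (ENNReal.ofReal ∘ laplaceWeight ε μ) n' S ≠ ⊤ :=
    ne_top_of_le_ne_top ENNReal.one_ne_top (noisyHistogram_le_one hW n' S)
  rw [hH, hH, ← toReal_noisyHistogram_ofReal (laplaceWeight_nonneg hε.le),
    ← toReal_noisyHistogram_ofReal (laplaceWeight_nonneg hε.le)]
  refine ENNReal.toReal_le_of_le_ofReal (add_nonneg (by positivity) hδ.1.le) (hmech.trans_eq ?_)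
  rw [ENNReal.ofReal_add (by positivity) hδ.1.le, ENNReal.ofReal_mul (exp_nonneg ε),
    ENNReal.ofReal_toReal hfin]
end

section
/- Let b : α → Fin m be a bucket function and let l be a list over α that is sorted by bucket, i.e., for all positions p ≤ q < l.length, b(l[p]) ≤ b(l[q]). For each i, let n_i be the number of elements of l with bucket i, and let c⁺_i, c⁻_i be integers with c⁻_i ≤ n_i ≤ c⁺_i. Define hi_i = min(l.length, ∑_{k ≤ i} c⁺_k) and lo_i = ∑_{k < i} max(0, c⁻_k). Then for every position j < l.length, if b(l[j]) = i then lo_i ≤ j and j < hi_i; that is, every element of bucket i lies inside the index interval [lo_i, hi_i). -/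
/-!
If the element at position `j` lies in bucket `i`, sortedness puts every element of a bucket
`k < i` strictly before `j` and every position up to `j` in a bucket `k ≤ i`. Hence
`∑_{k<i} n_k ≤ j < ∑_{k≤i} n_k`, and the bounds `c⁻ ≤ n ≤ c⁺` carry this over to `lo i` and `hi i`.
-/

namespace List

variable {α β : Type*}

theorem countP_mem_eq_sum_countP_eq [DecidableEq β] (f : α → β) (s : Finset β) (l : List α) :
    l.countP (fun a => f a ∈ s) = ∑ k ∈ s, l.countP (fun a => f a = k) := by
  induction l with
  | nil => simp
  | cons a l ih =>
    simp only [countP_cons, ih, Finset.sum_add_distrib, decide_eq_true_eq,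
      Finset.sum_ite_eq]

theorem countP_le_of_forall_not (p : α → Bool) (l : List α) (j : ℕ)
    (h : ∀ (q : ℕ) (hq : q < l.length), j ≤ q → ¬ p l[q]) : l.countP p ≤ j := by
  have hdrop : (l.drop j).countP p = 0 := by
    rw [countP_eq_zero]
    intro a ha
    obtain ⟨q, hq, rfl⟩ := mem_iff_getElem.mp ha
    rw [getElem_drop]
    exact h _ _ (Nat.le_add_right j q)
  calc l.countP p = (l.take j).countP p + (l.drop j).countP p := by
        rw [← countP_append, take_append_drop]
    _ ≤ j := by
        rw [hdrop, add_zero]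
        exact countP_le_length.trans (length_take_le j l)

theorem lt_countP_of_forall (p : α → Bool) (l : List α) (j : ℕ)
    (hj : j < l.length) (h : ∀ (q : ℕ) (hq : q < l.length), q ≤ j → p l[q]) :
    j < l.countP p := by
  have htake : (l.take (j + 1)).countP p = j + 1 := by
    rw [countP_eq_length.mpr, length_take_of_le hj]
    intro a ha
    obtain ⟨q, hq, rfl⟩ := mem_iff_getElem.mp ha
    rw [getElem_take]
    exact h _ _ (by grind)
  calc j < (l.take (j + 1)).countP p := by omega
    _ ≤ l.countP p := (take_sublist _ _).countP_le

section MonotoneKey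

variable [LinearOrder β] {f : α → β} {l : List α}

theorem countP_lt_key_le_of_monotone (hmono : Monotone (f ∘ l.get)) (j : Fin l.length) :
    l.countP (fun a => f a < f (l.get j)) ≤ j :=
  l.countP_le_of_forall_not _ j fun q hq hjq => by
    simpa using hmono (show j ≤ ⟨q, hq⟩ from hjq)

theorem lt_countP_key_le_of_monotone (hmono : Monotone (f ∘ l.get)) (j : Fin l.length) :
    (j : ℕ) < l.countP (fun a => f a ≤ f (l.get j)) :=
  l.lt_countP_of_forall _ j j.2 fun q hq hqj => by
    simpa using hmono (show ⟨q, hq⟩ ≤ j from hqj)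

end MonotoneKey

end List

/-- **Lossless index lookup on a bucket-sorted list.**
If `l` is sorted by the bucket function `b`, `n i` is the number of elements
of bucket `i`, and `c⁻ i ≤ n i ≤ c⁺ i`, then with
`hi i = min (|l|, ∑_{k ≤ i} c⁺ k)` and `lo i = ∑_{k < i} max (0, c⁻ k)`,
every position `j` whose element has bucket `i` satisfies
`lo i ≤ j < hi i`. -/
theorem special_index_lookup_lossless
    {α : Type*} (m : ℕ) (b : α → Fin m) (l : List α)
    (hsorted : ∀ (p q : ℕ) (hp : p < l.length) (hq : q < l.length), p ≤ q →
      b (l.get ⟨p, hp⟩) ≤ b (l.get ⟨q, hq⟩))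
    (n : Fin m → ℕ)
    (hn : ∀ i, n i = (l.filter (fun a => b a = i)).length)
    (cp cm : Fin m → ℤ)
    (hbound : ∀ i, cm i ≤ (n i : ℤ) ∧ (n i : ℤ) ≤ cp i)
    (hi lo : Fin m → ℤ)
    (hhi : ∀ i, hi i = min (l.length : ℤ) (∑ k ∈ Finset.Iic i, cp k))
    (hlo : ∀ i, lo i = ∑ k ∈ Finset.Iio i, max 0 (cm k)) :
    ∀ (j : ℕ) (hj : j < l.length) (i : Fin m),
      b (l.get ⟨j, hj⟩) = i → lo i ≤ (j : ℤ) ∧ (j : ℤ) < hi i := by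
  rintro j hj _ rfl
  have hmono : Monotone (b ∘ l.get) := fun p q hpq => hsorted p q p.2 q.2 hpq
  have hcount : ∀ s, ∑ k ∈ s, (n k : ℤ) = l.countP (fun a => b a ∈ s) := fun s => by
    rw [List.countP_mem_eq_sum_countP_eq]
    push_cast
    simp only [hn, List.countP_eq_length_filter]
  have hbelow := List.countP_lt_key_le_of_monotone hmono ⟨j, hj⟩
  have habove := List.lt_countP_key_le_of_monotone hmono ⟨j, hj⟩
  refine ⟨?_, ?_⟩
  · calc lo _ ≤ ∑ k ∈ Finset.Iio _, (n k : ℤ) := by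
          rw [hlo]; exact Finset.sum_le_sum fun k _ => max_le (Nat.cast_nonneg _) (hbound k).1
      _ ≤ j := by rw [hcount]; simp only [Finset.mem_Iio]; exact_mod_cast hbelow
  · rw [hhi]
    refine lt_min (by exact_mod_cast hj) ?_
    calc (j : ℤ) < ∑ k ∈ Finset.Iic _, (n k : ℤ) := by
          rw [hcount]; simp only [Finset.mem_Iic]; exact_mod_cast habove
      _ ≤ ∑ k ∈ Finset.Iic _, cp k := Finset.sum_le_sum fun k _ => (hbound k).2
end

section
/- Let D be a finite multiset of tuples, A : tuple → V an attribute map, and let B_1,…,B_m be pairwise disjoint sets covering V (the histogram bins). Suppose c⁺_i ≥ |{t ∈ D : A(t) ∈ B_i}| (counted with multiplicity) for each i. Then for every set vals ⊆ V, |{t ∈ D : A(t) ∈ vals}| ≤ min(|D|, ∑_{i : B_i ∩ vals ≠ ∅} c⁺_i). -/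
open scoped Classical

/-! Bins cover `V`, so every selected tuple falls into some bin meeting `vals`: the selection
count is bounded by the union bound over those bins, and each bin count by its `c⁺`. -/

namespace Multiset

variable {α ι : Type*}

theorem countP_le_sum_countP (p : α → Prop) [DecidablePred p] (q : ι → α → Prop)
    [∀ i, DecidablePred (q i)] (S : Finset ι) (s : Multiset α)
    (h : ∀ a ∈ s, p a → ∃ i ∈ S, q i a) :
    s.countP p ≤ ∑ i ∈ S, s.countP (q i) := by
  induction s using Multiset.induction with
  | empty => simp
  | cons a s ih =>
    have hs : ∀ b ∈ s, p b → ∃ i ∈ S, q i b := fun b hb => h b (mem_cons_of_mem hb)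
    have ha : (if p a then 1 else 0) ≤ ∑ i ∈ S, if q i a then 1 else 0 := by
      split_ifs with hpa
      · obtain ⟨i, hiS, hi⟩ := h a (mem_cons_self a s) hpa
        simpa [hi] using Finset.single_le_sum (f := fun i => if q i a then 1 else 0)
          (fun _ _ => Nat.zero_le _) hiS
      · exact Nat.zero_le _
    simp only [countP_cons, Finset.sum_add_distrib]
    exact add_le_add (ih hs) ha

end Multiset

theorem cardEst_sound_general
    {τ V : Type*} (D : Multiset τ) (A : τ → V)
    (m : ℕ) (B : Fin m → Set V)
    (hcover : (⋃ i, B i) = Set.univ)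
    (cp : Fin m → ℕ)
    (hcp : ∀ i, (D.filter (fun t => A t ∈ B i)).card ≤ cp i) :
    ∀ vals : Set V,
      (D.filter (fun t => A t ∈ vals)).card ≤
        min D.card (∑ i ∈ Finset.univ.filter (fun i => (B i ∩ vals).Nonempty), cp i) := by
  intro vals
  have hbin : ∀ t ∈ D, A t ∈ vals →
      ∃ i ∈ Finset.univ.filter (fun i => (B i ∩ vals).Nonempty), A t ∈ B i := by
    intro t _ ht
    obtain ⟨i, hi⟩ := Set.mem_iUnion.mp (hcover ▸ Set.mem_univ (A t))
    exact ⟨i, Finset.mem_filter.mpr ⟨Finset.mem_univ i, A t, hi, ht⟩, hi⟩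
  refine le_min (Multiset.card_le_card (Multiset.filter_le _ _)) ?_
  simp only [← Multiset.countP_eq_card_filter] at hcp ⊢
  exact (Multiset.countP_le_sum_countP _ _ _ D hbin).trans (Finset.sum_le_sum fun i _ => hcp i)

/-- **Soundness of SPECIAL's cardinality estimator for selections.**
If `c⁺ i` overestimates the number of tuples of `D` whose `A`-value lies in
bin `B i` (bins pairwise disjoint and covering `V`), then for every selection
`vals ⊆ V` the true selection cardinality is at most
`min (|D|, ∑_{i : B i ∩ vals ≠ ∅} c⁺ i)`. -/
theorem cardEst_sound
    {τ V : Type*} (D : Multiset τ) (A : τ → V)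
    (m : ℕ) (B : Fin m → Set V)
    (hdisj : ∀ i j, i ≠ j → Disjoint (B i) (B j))
    (hcover : (⋃ i, B i) = Set.univ)
    (cp : Fin m → ℕ)
    (hcp : ∀ i, (D.filter (fun t => A t ∈ B i)).card ≤ cp i) :
    ∀ vals : Set V,
      (D.filter (fun t => A t ∈ vals)).card ≤
        min D.card (∑ i ∈ Finset.univ.filter (fun i => (B i ∩ vals).Nonempty), cp i) :=
  cardEst_sound_general D A m B hcover cp hcp
end

section
/- Let D be a finite multiset of tuples with attribute maps A_ft : tuple → U and A_j : tuple → K, and let B_1,…,B_m be pairwise disjoint sets covering U. For each ℓ, let D^ℓ = {t ∈ D : A_ft(t) ∈ B_ℓ}, and let mf_ℓ be a natural number bounding, for every key k ∈ K, the multiplicity of k among the A_j-keys of D^ℓ; similarly let mf_D bound the max frequency of A_j over all of D. Then for every vals ⊆ U, writing D′ = {t ∈ D : A_ft(t) ∈ vals}, the max frequency of A_j over D′ is at most min( ∑_{ℓ : B_ℓ ∩ vals ≠ ∅} mf_ℓ , mf_D ). -/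
open scoped Classical

/-!
A tuple of the selection with join key `k` lies in some bin `B ℓ`, and that bin then meets
`vals`; so by a union bound the multiplicity of `k` after the selection is at most the sum,
over the bins meeting `vals`, of its multiplicities in the `D^ℓ`. The global bound holds
because a selection only removes tuples.
-/

namespace Multiset

theorem card_le_sum_card_filter {ι α : Type*} (s : Finset ι) (p : ι → α → Prop)
    [∀ i, DecidablePred (p i)] {M : Multiset α} (h : ∀ a ∈ M, ∃ i ∈ s, p i a) :
    card M ≤ ∑ i ∈ s, card (M.filter (p i)) := by
  induction M using Multiset.induction with
  | empty => simp
  | cons a M ih =>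
    obtain ⟨i, hi, hpa⟩ := h a (mem_cons_self a M)
    have hcard (j : ι) : card ((a ::ₘ M).filter (p j)) =
        card (M.filter (p j)) + if p j a then 1 else 0 := by
      split_ifs with hj <;> simp [hj]
    have hone : 1 ≤ ∑ j ∈ s, if p j a then 1 else 0 :=
      (Finset.single_le_sum (fun _ _ => Nat.zero_le _) hi).trans' (by simp [hpa])
    calc card (a ::ₘ M) = card M + 1 := card_cons a M
      _ ≤ ∑ j ∈ s, card (M.filter (p j)) + ∑ j ∈ s, if p j a then 1 else 0 :=
          add_le_add (ih fun b hb => h b (mem_cons_of_mem hb)) hone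
      _ = ∑ j ∈ s, card ((a ::ₘ M).filter (p j)) := by
          simp only [hcard, Finset.sum_add_distrib]

end Multiset

theorem mf_after_selection_bound_general
    {τ U K : Type*}
    (D : Multiset τ) (Aft : τ → U) (Aj : τ → K)
    (m : ℕ) (B : Fin m → Set U)
    (hcover : (⋃ i, B i) = Set.univ)
    (mf : Fin m → ℕ) (mfD : ℕ)
    (hmf : ∀ (ℓ : Fin m) (k : K),
      ((D.filter (fun t => Aft t ∈ B ℓ)).filter (fun t => Aj t = k)).card ≤ mf ℓ)
    (hmfD : ∀ k : K, (D.filter (fun t => Aj t = k)).card ≤ mfD) :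
    ∀ (vals : Set U) (k : K),
      ((D.filter (fun t => Aft t ∈ vals)).filter (fun t => Aj t = k)).card ≤
        min (∑ ℓ ∈ Finset.univ.filter (fun ℓ => (B ℓ ∩ vals).Nonempty), mf ℓ) mfD := by
  intro vals k
  refine le_min ?_ ((Multiset.card_le_card ?_).trans (hmfD k))
  · refine (Multiset.card_le_sum_card_filter _ (fun ℓ t => Aft t ∈ B ℓ) ?_).trans
      (Finset.sum_le_sum fun ℓ _ => (Multiset.card_le_card ?_).trans (hmf ℓ k))
    · intro t ht
      have hval : Aft t ∈ vals := (Multiset.mem_filter.mp (Multiset.mem_of_mem_filter ht)).2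
      obtain ⟨ℓ, hℓ⟩ := Set.mem_iUnion.mp (hcover ▸ Set.mem_univ (Aft t))
      exact ⟨ℓ, Finset.mem_filter.mpr ⟨Finset.mem_univ ℓ, Aft t, hℓ, hval⟩, hℓ⟩
    · simp only [Multiset.filter_filter]
      exact Multiset.monotone_filter_right D fun t ht => ⟨ht.2.1, ht.1⟩
  · exact Multiset.filter_le_filter _ (Multiset.filter_le _ _)

/-- **Correctness of the MF post-processing rule (Equation 2).**
With `D^ℓ` the sub-multiset of `D` whose filter-attribute falls in bin `B ℓ`,
per-bin MF bounds `mf ℓ` and a global bound `mf_D` on the join-key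
multiplicities, the max frequency of the join key over the filtered relation
`σ_{A_ft ∈ vals}(D)` is at most
`min (∑_{ℓ : B ℓ ∩ vals ≠ ∅} mf ℓ, mf_D)`. -/
theorem mf_after_selection_bound
    {τ U K : Type*}
    (D : Multiset τ) (Aft : τ → U) (Aj : τ → K)
    (m : ℕ) (B : Fin m → Set U)
    (hdisj : ∀ i j, i ≠ j → Disjoint (B i) (B j))
    (hcover : (⋃ i, B i) = Set.univ)
    (mf : Fin m → ℕ) (mfD : ℕ)
    (hmf : ∀ (ℓ : Fin m) (k : K),
      ((D.filter (fun t => Aft t ∈ B ℓ)).filter (fun t => Aj t = k)).card ≤ mf ℓ)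
    (hmfD : ∀ k : K, (D.filter (fun t => Aj t = k)).card ≤ mfD) :
    ∀ (vals : Set U) (k : K),
      ((D.filter (fun t => Aft t ∈ vals)).filter (fun t => Aj t = k)).card ≤
        min (∑ ℓ ∈ Finset.univ.filter (fun ℓ => (B ℓ ∩ vals).Nonempty), mf ℓ) mfD :=
  mf_after_selection_bound_general D Aft Aj m B hcover mf mfD hmf hmfD
end

section
/- Let R₀ and R₁ be finite multisets with key maps a₀ : α → K and a₁ : β → K, and let B_1,…,B_m be pairwise disjoint sets covering K. For each i let R₀^(i) = {s ∈ R₀ : a₀(s) ∈ B_i} and R₁^(i) = {t ∈ R₁ : a₁(t) ∈ B_i}. Then the equi-join decomposes exactly over the buckets: R₀ ⋈ R₁ equals the disjoint union over i of R₀^(i) ⋈ R₁^(i) (as multisets of pairs), and in particular |R₀ ⋈ R₁| = ∑_{i=1}^m |R₀^(i) ⋈ R₁^(i)|. -/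
open scoped Classical

theorem count_prod' {α β : Type*} [DecidableEq α] [DecidableEq β] (R₀ : Multiset α) (R₁ : Multiset β) (s : α) (t : β) :
    (R₀ ×ˢ R₁).count (s, t) = R₀.count s * R₁.count t := by
  induction R₀ using Multiset.induction with
  | empty => simp
  | cons a R ih =>
    simp only [Multiset.cons_product, Multiset.count_add, Multiset.count_map, ih,
      Multiset.count_cons]
    by_cases h : s = a
    · subst h
      simp only [if_pos rfl, add_mul, one_mul, Prod.ext_iff, true_and]
      rw [add_comm]
      congr 1
      simp [Multiset.count, Multiset.countP_eq_card_filter, eq_comm]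
    · simp [h, Prod.ext_iff, Ne.symm h]

/-- **Exact bucket decomposition of the equi-join.**
If the key domain `K` is partitioned into pairwise disjoint bins `B i`
covering `K`, then the equi-join `R₀ ⋈ R₁` equals the disjoint (multiset)
union over `i` of the per-bucket joins `R₀^(i) ⋈ R₁^(i)`, and in particular
its cardinality is the sum of the per-bucket join cardinalities. -/
theorem bucketized_join_decomposition
    {α β K : Type*}
    (R₀ : Multiset α) (R₁ : Multiset β) (a₀ : α → K) (a₁ : β → K)
    (m : ℕ) (B : Fin m → Set K)
    (hdisj : ∀ i j, i ≠ j → Disjoint (B i) (B j))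
    (hcover : (⋃ i, B i) = Set.univ) :
    ((R₀ ×ˢ R₁).filter (fun st => a₀ st.1 = a₁ st.2) =
      ∑ i : Fin m, ((R₀.filter (fun s => a₀ s ∈ B i)) ×ˢ
        (R₁.filter (fun t => a₁ t ∈ B i))).filter (fun st => a₀ st.1 = a₁ st.2)) ∧
    ((R₀ ×ˢ R₁).filter (fun st => a₀ st.1 = a₁ st.2)).card =
      ∑ i : Fin m, (((R₀.filter (fun s => a₀ s ∈ B i)) ×ˢ
        (R₁.filter (fun t => a₁ t ∈ B i))).filter (fun st => a₀ st.1 = a₁ st.2)).card := by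
  have heq : ((R₀ ×ˢ R₁).filter (fun st => a₀ st.1 = a₁ st.2) =
      ∑ i : Fin m, ((R₀.filter (fun s => a₀ s ∈ B i)) ×ˢ
        (R₁.filter (fun t => a₁ t ∈ B i))).filter (fun st => a₀ st.1 = a₁ st.2)) := by
    ext ⟨s, t⟩
    rw [Multiset.count_sum']
    simp only [Multiset.count_filter, count_prod', Multiset.count_filter]
    by_cases hp : a₀ s = a₁ t
    · simp only [if_pos hp]
      have : ∃ i, a₀ s ∈ B i := by
        have := Set.mem_univ (a₀ s)
        rw [← hcover] at this
        exact Set.mem_iUnion.1 this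
      obtain ⟨i₀, hi₀⟩ := this
      rw [Finset.sum_eq_single i₀]
      · simp [hi₀, hp ▸ hi₀]
      · intro j _ hj
        have : a₀ s ∉ B j := fun hm =>
          (hdisj i₀ j (fun h => hj h.symm)).ne_of_mem hi₀ hm rfl
        simp [this]
      · simp
    · simp [hp]
  refine ⟨heq, ?_⟩
  rw [heq]
  simp
end

section
/- Let ε > 0 and δ ∈ (0,1) satisfy δ·(e^ε + 1) ≤ 1. Let w⁺(x) = ((e^ε − 1)/(e^ε + 1))·exp(−ε·|x − μ⁺|) with μ⁺ = 1 − (1/ε)·ln(δ·(e^ε + 1)), and w⁻(x) = ((e^ε − 1)/(e^ε + 1))·exp(−ε·|x − μ⁻|) with μ⁻ = (1/ε)·ln(δ·(e^ε + 1)) − 1, both on ℤ. For a histogram n : Fin m → ℤ, define the bounding-histogram mechanism whose output measure on a set S ⊆ (Fin m → ℤ) × (Fin m → ℤ) is G_n(S) = ∑ over pairs (z⁺, z⁻) of integer vectors with (n + max(0, z⁺), n + min(0, z⁻)) ∈ S of ∏_i w⁺(z⁺_i) · ∏_i w⁻(z⁻_i), where the max/min are taken coordinatewise. Then for any two histograms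 n, n′ : Fin m → ℤ that agree on all coordinates except one coordinate j where |n_j − n′_j| = 1, and for any such set S, G_n(S) ≤ e^{2ε} · G_{n′}(S) + 2δ. -/
/-!
Write `d = n j - n' j = ±1` and couple the noise used for `n` with the noise used for `n'` by
shifting both `j`-th coordinates `z⁺_j, z⁻_j` by `d`. When `z⁺_j > 0` and `z⁻_j < 0`, the clamps
`max 0` and `min 0` are inactive at `j` before and after the shift, so both histograms release the
same pair, while each of the two discrete Laplace weights changes by a factor at most `e^ε`. The
remaining noise vectors have `z⁺_j ≤ 0` or `z⁻_j ≥ 0`, and the centres `μ⁺, μ⁻` are chosen so that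
each of these two events has mass exactly `δ`.
-/

open Real Set Function
open scoped ENNReal

noncomputable section

theorem ENNReal.tsum_mul_tsum {α β : Type*} (f : α → ℝ≥0∞) (g : β → ℝ≥0∞) :
    (∑' a, f a) * ∑' b, g b = ∑' z : α × β, f z.1 * g z.2 := by
  rw [ENNReal.tsum_prod', ← ENNReal.tsum_mul_right]
  simp_rw [ENNReal.tsum_mul_left]

theorem ENNReal.prod_tsum {ι β : Type*} [Fintype ι] (f : ι → β → ℝ≥0∞) :
    ∏ i, ∑' b, f i b = ∑' x : ι → β, ∏ i, f i (x i) := by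
  revert f
  refine Fintype.induction_empty_option (P := fun ι _ => ∀ f : ι → β → ℝ≥0∞,
    ∏ i, ∑' b, f i b = ∑' x : ι → β, ∏ i, f i (x i)) ?_ ?_ ?_ ι
  · intro α γ _ e ih f
    let : Fintype α := Fintype.ofEquiv γ e.symm
    rw [← e.prod_comp, ih, ← (e.arrowCongr (Equiv.refl β)).tsum_eq]
    refine tsum_congr fun x => ?_
    rw [← e.prod_comp]
    simp [Equiv.arrowCongr_apply]
  · simp
  · intro α _ ih f
    rw [Fintype.prod_option, ih, ENNReal.tsum_mul_tsum,
      ← (Equiv.piOptionEquivProd (β := fun _ => β)).symm.tsum_eq]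
    simp [Fintype.prod_option]

theorem ENNReal.tsum_indicator_apply_mem_prod_le {ι β : Type*} [Fintype ι] [DecidableEq ι]
    {g : β → ℝ≥0∞} (hg : ∑' b, g b ≤ 1) (j : ι) (B : Set β) :
    ∑' x : ι → β, {x | x j ∈ B}.indicator (fun x => ∏ i, g (x i)) x ≤ ∑' b, B.indicator g b := by
  have hfactor : ∀ x : ι → β, {x | x j ∈ B}.indicator (fun x => ∏ i, g (x i)) x
      = ∏ i, (if i = j then B.indicator g else g) (x i) := by
    intro x
    rw [Fintype.prod_eq_mul_prod_compl j, if_pos rfl,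
      Finset.prod_congr rfl fun i hi => by rw [if_neg (by simpa using hi : i ≠ j)]]
    by_cases hx : x j ∈ B
    · rw [indicator_of_mem (show x ∈ {x | x j ∈ B} from hx), indicator_of_mem hx,
        Fintype.prod_eq_mul_prod_compl j]
    · rw [indicator_of_notMem (show x ∉ {x | x j ∈ B} from hx), indicator_of_notMem hx, zero_mul]
  simp_rw [hfactor]
  rw [← ENNReal.prod_tsum, Fintype.prod_eq_mul_prod_compl j, if_pos rfl]
  calc (∑' b, B.indicator g b) * ∏ i ∈ {j}ᶜ, ∑' b, (if i = j then B.indicator g else g) b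
      ≤ (∑' b, B.indicator g b) * 1 := by
        gcongr
        refine Finset.prod_le_one' fun i hi => ?_
        rwa [if_neg (by simpa using hi : i ≠ j)]
    _ = ∑' b, B.indicator g b := mul_one _

theorem ENNReal.tsum_le_mul_tsum_add_tsum_of_injective {α β : Type*} {f h : α → ℝ≥0∞}
    {g : β → ℝ≥0∞} {c : ℝ≥0∞} {A : Set α} {T : α → β} (hT : Injective T)
    (hA : ∀ z ∈ A, f z ≤ c * g (T z)) (hAc : ∀ z ∉ A, f z ≤ h z) :
    ∑' z, f z ≤ c * ∑' z, g z + ∑' z, h z := by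
  have hsplit : ∀ z, f z ≤ A.indicator (fun z => c * g (T z)) z + h z := by
    intro z
    by_cases hz : z ∈ A
    · rw [indicator_of_mem hz]
      exact (hA z hz).trans le_self_add
    · exact (hAc z hz).trans le_add_self
  calc ∑' z, f z ≤ ∑' z, A.indicator (fun z => c * g (T z)) z + ∑' z, h z :=
        (ENNReal.tsum_le_tsum hsplit).trans_eq ENNReal.tsum_add
    _ ≤ ∑' z, c * g (T z) + ∑' z, h z := by
        gcongr with z; exact indicator_le_self _ _ z
    _ ≤ c * ∑' z, g z + ∑' z, h z := by
        rw [ENNReal.tsum_mul_left]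
        gcongr ?_ + _
        exact mul_le_mul' le_rfl (ENNReal.tsum_comp_le_tsum_of_injective hT g)

theorem ENNReal.tsum_indicator_ofReal_of_hasSum {α : Type*} {f : α → ℝ} {s : Set α} {a : ℝ}
    (hf : ∀ x, 0 ≤ f x) (h : HasSum (s.indicator f) a) :
    ∑' x, s.indicator (fun x => ENNReal.ofReal (f x)) x = ENNReal.ofReal a := by
  rw [← h.tsum_eq, ENNReal.ofReal_tsum_of_nonneg (indicator_nonneg fun x _ => hf x) h.summable]
  exact tsum_congr fun x => congrFun (indicator_comp_of_zero ENNReal.ofReal_zero) x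

def discreteLaplaceWeight (ε μ : ℝ) (x : ℤ) : ℝ :=
  (exp ε - 1) / (exp ε + 1) * exp (-ε * |(x : ℝ) - μ|)

section DiscreteLaplace

variable {ε : ℝ}

lemma discreteLaplaceWeight_nonneg (hε : 0 ≤ ε) (μ : ℝ) (x : ℤ) :
    0 ≤ discreteLaplaceWeight ε μ x := by
  have : 1 ≤ exp ε := one_le_exp hε
  unfold discreteLaplaceWeight
  positivity

lemma discreteLaplaceWeight_neg (ε μ : ℝ) (x : ℤ) :
    discreteLaplaceWeight ε μ (-x) = discreteLaplaceWeight ε (-μ) x := by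
  simp only [discreteLaplaceWeight, Int.cast_neg, ← abs_neg (-(x : ℝ) - μ)]
  ring_nf

lemma ofReal_discreteLaplaceWeight_le_exp_mul (hε : 0 ≤ ε) (μ : ℝ) {d : ℤ} (hd : |d| ≤ 1)
    (x : ℤ) : ENNReal.ofReal (discreteLaplaceWeight ε μ x) ≤
      ENNReal.ofReal (exp ε) * ENNReal.ofReal (discreteLaplaceWeight ε μ (x + d)) := by
  have hd' : |(d : ℝ)| ≤ 1 := by exact_mod_cast hd
  have htri : |((x + d : ℤ) : ℝ) - μ| ≤ |(x : ℝ) - μ| + 1 := by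
    push_cast
    calc |(x : ℝ) + d - μ| = |((x : ℝ) - μ) + d| := by ring_nf
      _ ≤ |(x : ℝ) - μ| + |(d : ℝ)| := abs_add_le _ _
      _ ≤ |(x : ℝ) - μ| + 1 := by linarith
  have hexp : exp (-ε * |(x : ℝ) - μ|) ≤ exp ε * exp (-ε * |((x + d : ℤ) : ℝ) - μ|) := by
    rw [← exp_add]
    exact exp_le_exp.mpr (by nlinarith)
  rw [← ENNReal.ofReal_mul (exp_nonneg ε)]
  refine ENNReal.ofReal_le_ofReal ?_
  unfold discreteLaplaceWeight
  rw [mul_left_comm]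
  exact mul_le_mul_of_nonneg_left hexp (div_nonneg (by linarith [one_le_exp hε]) (by positivity))

lemma hasSum_discreteLaplaceWeight_sub_natCast (hε : 0 < ε) {μ : ℝ} {M : ℤ} (hM : (M : ℝ) ≤ μ) :
    HasSum (fun k : ℕ => discreteLaplaceWeight ε μ (M - k))
      ((exp ε - 1) / (exp ε + 1) * exp (-ε * (μ - M)) * (1 - exp (-ε))⁻¹) := by
  have hterm : ∀ k : ℕ, discreteLaplaceWeight ε μ (M - k)
      = (exp ε - 1) / (exp ε + 1) * exp (-ε * (μ - M)) * exp (-ε) ^ k := by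
    intro k
    have habs : |((M - k : ℤ) : ℝ) - μ| = (μ - M) + k := by
      rw [abs_of_nonpos (by push_cast; linarith [(Nat.cast_nonneg k : (0 : ℝ) ≤ k)])]
      push_cast; ring
    rw [discreteLaplaceWeight, habs, mul_assoc, ← exp_nat_mul, ← exp_add]
    ring_nf
  simp_rw [hterm]
  exact (hasSum_geometric_of_lt_one (exp_nonneg _) (exp_lt_one_iff.mpr (by linarith))).mul_left _

lemma hasSum_discreteLaplaceWeight (hε : 0 < ε) (μ : ℝ) :
    HasSum (discreteLaplaceWeight ε μ)
      ((exp ε - 1) / (exp ε + 1) * (exp (-ε * (μ - ⌊μ⌋)) + exp (-ε * (⌊μ⌋ + 1 - μ))) *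
        (1 - exp (-ε))⁻¹) := by
  set M := ⌊μ⌋
  set f := discreteLaplaceWeight ε μ ∘ Equiv.subLeft M
  have hlower : HasSum (fun k : ℕ => f k)
      ((exp ε - 1) / (exp ε + 1) * exp (-ε * (μ - M)) * (1 - exp (-ε))⁻¹) :=
    hasSum_discreteLaplaceWeight_sub_natCast hε (Int.floor_le μ)
  have hupper : HasSum (fun k : ℕ => f (-(k + 1)))
      ((exp ε - 1) / (exp ε + 1) * exp (-ε * (M + 1 - μ)) * (1 - exp (-ε))⁻¹) := by
    convert hasSum_discreteLaplaceWeight_sub_natCast (μ := -μ) (M := -(M + 1)) hε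
      (by push_cast; linarith [Int.lt_floor_add_one μ]) using 1
    · ext k
      simp only [f, Function.comp_apply, Equiv.subLeft_apply, ← discreteLaplaceWeight_neg]
      congr 1; ring
    · push_cast; ring_nf
  rw [← (Equiv.subLeft M).hasSum_iff]
  convert hlower.of_nat_of_neg_add_one hupper using 1
  ring

lemma tsum_ofReal_discreteLaplaceWeight_le_one (hε : 0 < ε) (μ : ℝ) :
    ∑' x, ENNReal.ofReal (discreteLaplaceWeight ε μ x) ≤ 1 := by
  set t := μ - ⌊μ⌋
  have ht0 : 0 ≤ t := sub_nonneg.mpr (Int.floor_le μ)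
  have ht1 : t ≤ 1 := by linarith [Int.lt_floor_add_one μ]
  -- `x + y ≤ 1 + x y` for `x, y ≤ 1`, and here `x y = e^{-ε}`
  have htails : exp (-ε * t) + exp (-ε * (1 - t)) ≤ 1 + exp (-ε) := by
    have ha : exp (-ε * t) ≤ 1 := exp_le_one_iff.mpr (by nlinarith)
    have hb : exp (-ε * (1 - t)) ≤ 1 := exp_le_one_iff.mpr (by nlinarith)
    have hab : exp (-ε * t) * exp (-ε * (1 - t)) = exp (-ε) := by rw [← exp_add]; ring_nf
    nlinarith [mul_nonneg (sub_nonneg.mpr ha) (sub_nonneg.mpr hb)]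
  have hE : 1 < exp ε := one_lt_exp_iff.mpr hε
  rw [← ENNReal.ofReal_tsum_of_nonneg (discreteLaplaceWeight_nonneg hε.le μ)
    (hasSum_discreteLaplaceWeight hε μ).summable, ENNReal.ofReal_le_one,
    (hasSum_discreteLaplaceWeight hε μ).tsum_eq, show (⌊μ⌋ : ℝ) + 1 - μ = 1 - t by ring]
  calc (exp ε - 1) / (exp ε + 1) * (exp (-ε * t) + exp (-ε * (1 - t))) * (1 - exp (-ε))⁻¹
      ≤ (exp ε - 1) / (exp ε + 1) * (1 + exp (-ε)) * (1 - exp (-ε))⁻¹ := by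
        gcongr _ * ?_ * _
        exact inv_nonneg.mpr (sub_nonneg.mpr (exp_le_one_iff.mpr (by linarith)))
    _ = 1 := by
        have : exp ε - 1 ≠ 0 := by linarith
        rw [exp_neg]
        field_simp

lemma hasSum_indicator_Iic_zero_discreteLaplaceWeight (hε : 0 < ε) {μ : ℝ} (hμ : 0 ≤ μ) :
    HasSum ((Iic 0).indicator (discreteLaplaceWeight ε μ)) (exp (ε * (1 - μ)) / (exp ε + 1)) := by
  have hE : 1 < exp ε := one_lt_exp_iff.mpr hε
  rw [← (neg_injective.comp Nat.cast_injective).hasSum_iff]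
  · convert hasSum_discreteLaplaceWeight_sub_natCast (M := 0) hε (by simpa using hμ) using 1
    · ext k
      simp [indicator_of_mem]
    · have : exp ε - 1 ≠ 0 := by linarith
      rw [Int.cast_zero, sub_zero, show ε * (1 - μ) = ε + -ε * μ by ring, exp_add, exp_neg]
      field_simp
  · rintro x hx
    refine indicator_of_notMem (fun hx0 => hx ⟨x.natAbs, ?_⟩) _
    simp only [mem_Iic] at hx0
    show -((x.natAbs : ℕ) : ℤ) = x
    omega

lemma hasSum_indicator_Ici_zero_discreteLaplaceWeight (hε : 0 < ε) {μ : ℝ} (hμ : μ ≤ 0) :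
    HasSum ((Ici 0).indicator (discreteLaplaceWeight ε μ)) (exp (ε * (1 + μ)) / (exp ε + 1)) := by
  rw [← (Equiv.neg ℤ).hasSum_iff]
  convert hasSum_indicator_Iic_zero_discreteLaplaceWeight hε (neg_nonneg.mpr hμ) using 1
  · ext x
    simp [indicator_apply, discreteLaplaceWeight_neg]
  · rw [sub_neg_eq_add]

end DiscreteLaplace

namespace BoundingHistogram

variable {ι : Type*}

def release (n : ι → ℤ) (z : (ι → ℤ) × (ι → ℤ)) : (ι → ℤ) × (ι → ℤ) :=
  (fun i => n i + max 0 (z.1 i), fun i => n i + min 0 (z.2 i))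

lemma release_add_single [DecidableEq ι] (n : ι → ℤ) {d : ℤ} (hd : |d| ≤ 1) {j : ι}
    {z : (ι → ℤ) × (ι → ℤ)} (h₁ : 0 < z.1 j) (h₂ : z.2 j < 0) :
    release (n + Pi.single j d) z = release n (z + (Pi.single j d, Pi.single j d)) := by
  have := abs_le.mp hd
  ext i : 2 <;> by_cases hi : i = j
  all_goals simp [release, hi]
  all_goals omega

variable [Fintype ι]

def noiseWeight (p q : ℤ → ℝ≥0∞) (z : (ι → ℤ) × (ι → ℤ)) : ℝ≥0∞ :=
  (∏ i, p (z.1 i)) * ∏ i, q (z.2 i)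

/-- The paper's `G_n(S)`, summed in `ℝ≥0∞` so that no summability side conditions arise. -/
def outputMass (p q : ℤ → ℝ≥0∞) (n : ι → ℤ) (S : Set ((ι → ℤ) × (ι → ℤ))) : ℝ≥0∞ :=
  ∑' z, (release n ⁻¹' S).indicator (noiseWeight p q) z

lemma toReal_outputMass_ofReal {wp wm : ℤ → ℝ} (hwp : ∀ x, 0 ≤ wp x) (hwm : ∀ x, 0 ≤ wm x)
    (n : ι → ℤ) (S : Set ((ι → ℤ) × (ι → ℤ))) :
    (outputMass (fun x => ENNReal.ofReal (wp x)) (fun x => ENNReal.ofReal (wm x)) n S).toReal =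
      ∑' z, (release n ⁻¹' S).indicator (fun z => (∏ i, wp (z.1 i)) * ∏ i, wm (z.2 i)) z := by
  rw [outputMass, ENNReal.tsum_toReal_eq fun z =>
    ne_top_of_le_ne_top (ENNReal.mul_ne_top
      (ENNReal.prod_ne_top fun _ _ => ENNReal.ofReal_ne_top)
      (ENNReal.prod_ne_top fun _ _ => ENNReal.ofReal_ne_top)) (indicator_le_self _ _ z)]
  refine tsum_congr fun z => ?_
  by_cases hz : z ∈ release n ⁻¹' S
  · simp [hz, noiseWeight, ENNReal.toReal_prod, hwp, hwm]
  · simp [hz]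

variable {p q : ℤ → ℝ≥0∞}

lemma outputMass_le_one (hp : ∑' y, p y ≤ 1) (hq : ∑' y, q y ≤ 1) (n : ι → ℤ)
    (S : Set ((ι → ℤ) × (ι → ℤ))) : outputMass p q n S ≤ 1 :=
  calc outputMass p q n S ≤ ∑' z, noiseWeight p q z :=
        ENNReal.tsum_le_tsum fun z => indicator_le_self _ _ z
    _ = (∏ _i : ι, ∑' y, p y) * ∏ _i : ι, ∑' y, q y := by
        rw [ENNReal.prod_tsum, ENNReal.prod_tsum, ENNReal.tsum_mul_tsum]; rfl
    _ ≤ 1 * 1 := by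
        gcongr
        exacts [Finset.prod_le_one' fun _ _ => hp, Finset.prod_le_one' fun _ _ => hq]
    _ = 1 := mul_one 1

variable [DecidableEq ι]

lemma tsum_indicator_noiseWeight_le (hp : ∑' y, p y ≤ 1) (hq : ∑' y, q y ≤ 1) (j : ι) :
    ∑' z, {z : (ι → ℤ) × (ι → ℤ) | z.1 j ≤ 0 ∨ 0 ≤ z.2 j}.indicator (noiseWeight p q) z
      ≤ ∑' y, (Iic 0).indicator p y + ∑' y, (Ici 0).indicator q y := by
  have hfst : ∑' z, {z : (ι → ℤ) × (ι → ℤ) | z.1 j ≤ 0}.indicator (noiseWeight p q) z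
      ≤ ∑' y, (Iic 0).indicator p y :=
    calc _ = (∑' x, {x : ι → ℤ | x j ∈ Iic 0}.indicator (fun x => ∏ i, p (x i)) x) *
          ∑' y : ι → ℤ, ∏ i, q (y i) := by
          rw [ENNReal.tsum_mul_tsum]
          exact tsum_congr fun z => indicator_mul_left _ _ _
      _ ≤ (∑' y, (Iic 0).indicator p y) * 1 := by
          gcongr
          · exact ENNReal.tsum_indicator_apply_mem_prod_le hp j _
          · exact (ENNReal.prod_tsum _).symm.trans_le (Finset.prod_le_one' fun _ _ => hq)
      _ = _ := mul_one _
  have hsnd : ∑' z, {z : (ι → ℤ) × (ι → ℤ) | 0 ≤ z.2 j}.indicator (noiseWeight p q) z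
      ≤ ∑' y, (Ici 0).indicator q y :=
    calc _ = (∑' x : ι → ℤ, ∏ i, p (x i)) *
          ∑' y, {y : ι → ℤ | y j ∈ Ici 0}.indicator (fun y => ∏ i, q (y i)) y := by
          rw [ENNReal.tsum_mul_tsum]
          exact tsum_congr fun z => indicator_mul_right _ _ _
      _ ≤ 1 * ∑' y, (Ici 0).indicator q y := by
          gcongr
          · exact (ENNReal.prod_tsum _).symm.trans_le (Finset.prod_le_one' fun _ _ => hp)
          · exact ENNReal.tsum_indicator_apply_mem_prod_le hq j _
      _ = _ := one_mul _
  calc _ ≤ ∑' z, ({z : (ι → ℤ) × (ι → ℤ) | z.1 j ≤ 0}.indicator (noiseWeight p q) z +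
        {z : (ι → ℤ) × (ι → ℤ) | 0 ≤ z.2 j}.indicator (noiseWeight p q) z) :=
        ENNReal.tsum_le_tsum fun z => le_self_add.trans_eq (indicator_union_add_inter_apply _ _ _ z)
    _ ≤ _ := ENNReal.tsum_add.trans_le (add_le_add hfst hsnd)

variable {c : ℝ≥0∞} {d : ℤ}

lemma prod_le_mul_prod_add_single (hpd : ∀ y, p y ≤ c * p (y + d)) (x : ι → ℤ) (j : ι) :
    ∏ i, p (x i) ≤ c * ∏ i, p ((x + Pi.single j d : ι → ℤ) i) := by
  have hrest : ∏ i ∈ {j}ᶜ, p ((x + Pi.single j d : ι → ℤ) i) = ∏ i ∈ {j}ᶜ, p (x i) :=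
    Finset.prod_congr rfl fun i hi => by simp [Pi.single_eq_of_ne (by simpa using hi : i ≠ j)]
  rw [Fintype.prod_eq_mul_prod_compl j, Fintype.prod_eq_mul_prod_compl j, hrest, Pi.add_apply,
    Pi.single_eq_same, ← mul_assoc]
  gcongr ?_ * _
  exact hpd _

lemma noiseWeight_le_mul_add_single (hpd : ∀ y, p y ≤ c * p (y + d))
    (hqd : ∀ y, q y ≤ c * q (y + d)) (j : ι) (z : (ι → ℤ) × (ι → ℤ)) :
    noiseWeight p q z ≤ c ^ 2 * noiseWeight p q (z + (Pi.single j d, Pi.single j d)) :=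
  calc noiseWeight p q z
      ≤ (c * ∏ i, p ((z.1 + Pi.single j d : ι → ℤ) i)) *
          (c * ∏ i, q ((z.2 + Pi.single j d : ι → ℤ) i)) :=
        mul_le_mul' (prod_le_mul_prod_add_single hpd z.1 j) (prod_le_mul_prod_add_single hqd z.2 j)
    _ = c ^ 2 * noiseWeight p q (z + (Pi.single j d, Pi.single j d)) := by
        rw [noiseWeight, mul_mul_mul_comm, sq]; rfl

theorem outputMass_add_single_le (hp : ∑' y, p y ≤ 1) (hq : ∑' y, q y ≤ 1)
    (hpd : ∀ y, p y ≤ c * p (y + d)) (hqd : ∀ y, q y ≤ c * q (y + d)) (hd : |d| ≤ 1)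
    (n : ι → ℤ) (j : ι) (S : Set ((ι → ℤ) × (ι → ℤ))) :
    outputMass p q (n + Pi.single j d) S ≤
      c ^ 2 * outputMass p q n S + (∑' y, (Iic 0).indicator p y + ∑' y, (Ici 0).indicator q y) := by
  refine (ENNReal.tsum_le_mul_tsum_add_tsum_of_injective (add_left_injective
    (Pi.single j d, Pi.single j d)) (A := {z | 0 < z.1 j ∧ z.2 j < 0}) ?_ ?_).trans
    (add_le_add le_rfl (tsum_indicator_noiseWeight_le hp hq j))
  · rintro z ⟨h₁, h₂⟩
    have hmem : z ∈ release (n + Pi.single j d) ⁻¹' S ↔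
        z + (Pi.single j d, Pi.single j d) ∈ release n ⁻¹' S := by
      rw [mem_preimage, mem_preimage, release_add_single n hd h₁ h₂]
    by_cases hS : z + (Pi.single j d, Pi.single j d) ∈ release n ⁻¹' S
    · rw [indicator_of_mem (hmem.mpr hS), indicator_of_mem hS]
      exact noiseWeight_le_mul_add_single hpd hqd j z
    · rw [indicator_of_notMem (hmem.not.mpr hS)]
      exact zero_le
  · intro z hz
    refine (indicator_le_self _ _ z).trans_eq (indicator_of_mem ?_ _).symm
    simp only [mem_ofPred_eq, not_and_or, not_lt] at hz ⊢
    exact hz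

theorem toReal_outputMass_discreteLaplace_add_single_le {ε μp μm : ℝ} (hε : 0 < ε)
    (hμp : 0 ≤ μp) (hμm : μm ≤ 0) (hd : |d| ≤ 1) (n : ι → ℤ) (j : ι)
    (S : Set ((ι → ℤ) × (ι → ℤ))) :
    (outputMass (fun x => ENNReal.ofReal (discreteLaplaceWeight ε μp x))
        (fun x => ENNReal.ofReal (discreteLaplaceWeight ε μm x)) (n + Pi.single j d) S).toReal ≤
      exp (2 * ε) * (outputMass (fun x => ENNReal.ofReal (discreteLaplaceWeight ε μp x))
        (fun x => ENNReal.ofReal (discreteLaplaceWeight ε μm x)) n S).toReal +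
      (exp (ε * (1 - μp)) / (exp ε + 1) + exp (ε * (1 + μm)) / (exp ε + 1)) := by
  have hp := tsum_ofReal_discreteLaplaceWeight_le_one hε μp
  have hq := tsum_ofReal_discreteLaplaceWeight_le_one hε μm
  have hmass := outputMass_add_single_le hp hq
    (ofReal_discreteLaplaceWeight_le_exp_mul hε.le μp hd)
    (ofReal_discreteLaplaceWeight_le_exp_mul hε.le μm hd) hd n j S
  rw [ENNReal.tsum_indicator_ofReal_of_hasSum (discreteLaplaceWeight_nonneg hε.le μp)
      (hasSum_indicator_Iic_zero_discreteLaplaceWeight hε hμp),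
    ENNReal.tsum_indicator_ofReal_of_hasSum (discreteLaplaceWeight_nonneg hε.le μm)
      (hasSum_indicator_Ici_zero_discreteLaplaceWeight hε hμm)] at hmass
  have hfin := (outputMass_le_one hp hq n S).trans_lt ENNReal.one_lt_top
  refine (ENNReal.toReal_mono (by finiteness) hmass).trans_eq ?_
  rw [ENNReal.toReal_add (by finiteness) (by finiteness), ENNReal.toReal_mul,
    ENNReal.toReal_pow, ENNReal.toReal_add (by finiteness) (by finiteness),
    ENNReal.toReal_ofReal (exp_nonneg _), ENNReal.toReal_ofReal (by positivity),
    ENNReal.toReal_ofReal (by positivity), ← exp_nat_mul]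
  push_cast
  ring

end BoundingHistogram

end

open BoundingHistogram

/-- **(2ε, 2δ)-DP of the bounding-histogram mechanism.**
The pair `(h⁺, h⁻)` is released by adding independent positive one-sided
noise `max 0 (z⁺ i)` (weight `w⁺`, center `μ⁺`) and negative one-sided noise
`min 0 (z⁻ i)` (weight `w⁻`, center `μ⁻`) to every bin.  For histograms
`n, n'` differing by `1` in exactly one bin `j`,
`G n S ≤ e^{2ε} · G n' S + 2δ` for every output set `S`. -/
theorem bounding_histogram_dp
    (ε δ : ℝ) (hε : 0 < ε) (hδ : δ ∈ Set.Ioo (0 : ℝ) 1)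
    (hδε : δ * (Real.exp ε + 1) ≤ 1)
    (μp μm : ℝ)
    (hμp : μp = 1 - (1 / ε) * Real.log (δ * (Real.exp ε + 1)))
    (hμm : μm = (1 / ε) * Real.log (δ * (Real.exp ε + 1)) - 1)
    (wp wm : ℤ → ℝ)
    (hwp : ∀ x : ℤ, wp x =
      ((Real.exp ε - 1) / (Real.exp ε + 1)) * Real.exp (-ε * |(x : ℝ) - μp|))
    (hwm : ∀ x : ℤ, wm x =
      ((Real.exp ε - 1) / (Real.exp ε + 1)) * Real.exp (-ε * |(x : ℝ) - μm|))
    (m : ℕ)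
    (G : (Fin m → ℤ) → Set ((Fin m → ℤ) × (Fin m → ℤ)) → ℝ)
    (hG : ∀ (n : Fin m → ℤ) (S : Set ((Fin m → ℤ) × (Fin m → ℤ))),
      G n S = ∑' z : (Fin m → ℤ) × (Fin m → ℤ),
        S.indicator (fun _ => (∏ i, wp (z.1 i)) * ∏ i, wm (z.2 i))
          (fun i => n i + max 0 (z.1 i), fun i => n i + min 0 (z.2 i)))
    (n n' : Fin m → ℤ) (j : Fin m)
    (hagree : ∀ i, i ≠ j → n i = n' i) (hj : |n j - n' j| = 1)
    (S : Set ((Fin m → ℤ) × (Fin m → ℤ))) :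
    G n S ≤ Real.exp (2 * ε) * G n' S + 2 * δ := by
  obtain rfl : wp = discreteLaplaceWeight ε μp := funext hwp
  obtain rfl : wm = discreteLaplaceWeight ε μm := funext hwm
  have hpos : 0 < δ * (exp ε + 1) := by have := hδ.1; positivity
  have hL : log (δ * (exp ε + 1)) ≤ 0 := log_nonpos hpos.le hδε
  have hL' := mul_nonpos_of_nonneg_of_nonpos (one_div_nonneg.mpr hε.le) hL
  have htail : exp (ε * (1 - μp)) / (exp ε + 1) = δ := by
    rw [hμp, show ε * (1 - (1 - 1 / ε * log (δ * (exp ε + 1)))) = log (δ * (exp ε + 1)) by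
      field_simp; ring, exp_log hpos]
    field_simp
  have hn : n = n' + Pi.single j (n j - n' j) := by
    ext i
    by_cases hi : i = j
    · subst hi; simp
    · simp [hi, hagree i hi]
  have hG' : ∀ ν, G ν S = (outputMass (fun x => ENNReal.ofReal (discreteLaplaceWeight ε μp x))
      (fun x => ENNReal.ofReal (discreteLaplaceWeight ε μm x)) ν S).toReal := fun ν =>
    (hG ν S).trans (toReal_outputMass_ofReal (discreteLaplaceWeight_nonneg hε.le μp)
      (discreteLaplaceWeight_nonneg hε.le μm) ν S).symm
  have key := toReal_outputMass_discreteLaplace_add_single_le hε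
    (show 0 ≤ μp by rw [hμp]; linarith) (show μm ≤ 0 by rw [hμm]; linarith) hj.le n' j S
  rw [← hn, ← hG', ← hG', show 1 + μm = 1 - μp by rw [hμp, hμm]; ring, htail] at key
  linarith
end

section
/- Let R₀ and R₁ be finite multisets with key maps a₀ : α → K and a₁ : β → K, let B_1,…,B_m be pairwise disjoint sets covering K, and for each i let R₀^(i) and R₁^(i) be the sub-multisets of R₀ and R₁ whose keys lie in B_i. Suppose mf₀ and mf₁ are natural numbers bounding, for every key k ∈ K, the multiplicity of k among the keys of R₀ and of R₁ respectively. Then |R₀ ⋈ R₁| ≤ ∑_{i=1}^m min(|R₀^(i)|·mf₁, |R₁^(i)|·mf₀); i.e., the sum of the per-bucket MF compaction sizes computed by (MX)JOIN is an upper bound on the total equi-join size, so per-bucket compaction to these sizes is lossless. -/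
open scoped Classical

private lemma mxjoin_split {γ : Type*} {m : ℕ} (S : Multiset γ) (g : γ → Fin m) :
    S.card = ∑ i : Fin m, (S.filter (fun x => g x = i)).card := by
  induction S using Multiset.induction with
  | empty => simp
  | cons a s ih =>
    simp only [Multiset.card_cons, Multiset.filter_cons, Multiset.card_add,
      apply_ite Multiset.card, Multiset.card_singleton, Multiset.card_zero, ih,
      Finset.sum_add_distrib]
    rw [Finset.sum_ite_eq Finset.univ (g a) (fun _ => 1)]
    simp [add_comm]

private lemma mxjoin_boundA {α β K : Type*} [DecidableEq K]
    (R₀ : Multiset α) (R₁ : Multiset β) (a₀ : α → K) (a₁ : β → K)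
    (mf₁ : ℕ) (h₁ : ∀ k : K, (R₁.map a₁).count k ≤ mf₁)
    (q : K → Prop) [DecidablePred q] :
    ((R₀ ×ˢ R₁).filter (fun st => a₀ st.1 = a₁ st.2 ∧ q (a₀ st.1))).card ≤
      (R₀.filter (fun s => q (a₀ s))).card * mf₁ := by
  induction R₀ using Multiset.induction with
  | empty => simp
  | cons a s ih =>
    rw [Multiset.cons_product, Multiset.filter_add, Multiset.card_add,
      Multiset.filter_cons, Multiset.card_add]
    have hinner : ((R₁.map (Prod.mk a)).filter
        (fun st => a₀ st.1 = a₁ st.2 ∧ q (a₀ st.1))).card ≤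
        (if q (a₀ a) then mf₁ else 0) := by
      rw [Multiset.filter_map, Multiset.card_map]
      by_cases hq : q (a₀ a)
      · simp only [hq, if_true]
        calc (Multiset.filter ((fun st => a₀ st.1 = a₁ st.2 ∧ q (a₀ st.1)) ∘ Prod.mk a) R₁).card
            ≤ (Multiset.filter (fun t => a₀ a = a₁ t) R₁).card := by
              apply Multiset.card_le_card
              apply Multiset.monotone_filter_right
              intro t ht; exact ht.1
          _ = (R₁.map a₁).count (a₀ a) := (Multiset.count_map _ _ _).symm
          _ ≤ mf₁ := h₁ _
      · simp only [hq, if_false, Nat.le_zero, Multiset.card_eq_zero,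
          Multiset.filter_eq_nil]
        intro t ht h; exact hq h.2
    calc _ ≤ (if q (a₀ a) then mf₁ else 0) +
          (Multiset.filter (fun s => q (a₀ s)) s).card * mf₁ := Nat.add_le_add hinner ih
      _ ≤ _ := by
          by_cases hq : q (a₀ a) <;> simp [hq, Nat.add_mul, Nat.add_comm]

private lemma mxjoin_boundB {α β K : Type*} [DecidableEq K]
    (R₀ : Multiset α) (R₁ : Multiset β) (a₀ : α → K) (a₁ : β → K)
    (mf₀ : ℕ) (h₀ : ∀ k : K, (R₀.map a₀).count k ≤ mf₀)
    (q : K → Prop) [DecidablePred q] :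
    ((R₀ ×ˢ R₁).filter (fun st => a₀ st.1 = a₁ st.2 ∧ q (a₁ st.2))).card ≤
      (R₁.filter (fun t => q (a₁ t))).card * mf₀ := by
  induction R₁ using Multiset.induction with
  | empty => simp
  | cons b t ih =>
    rw [Multiset.product_cons, Multiset.filter_add, Multiset.card_add,
      Multiset.filter_cons, Multiset.card_add]
    have hinner : ((R₀.map (fun a => (a, b))).filter
        (fun st => a₀ st.1 = a₁ st.2 ∧ q (a₁ st.2))).card ≤
        (if q (a₁ b) then mf₀ else 0) := by
      rw [Multiset.filter_map, Multiset.card_map]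
      by_cases hq : q (a₁ b)
      · simp only [hq, if_true]
        calc (Multiset.filter ((fun st => a₀ st.1 = a₁ st.2 ∧ q (a₁ st.2)) ∘
              (fun a => (a, b))) R₀).card
            ≤ (Multiset.filter (fun s => a₁ b = a₀ s) R₀).card := by
              apply Multiset.card_le_card
              apply Multiset.monotone_filter_right
              intro s hs; exact hs.1.symm
          _ = (R₀.map a₀).count (a₁ b) := (Multiset.count_map _ _ _).symm
          _ ≤ mf₀ := h₀ _
      · simp only [hq, if_false, Nat.le_zero, Multiset.card_eq_zero,
          Multiset.filter_eq_nil]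
        intro s hs h; exact hq h.2
    calc _ ≤ (if q (a₁ b) then mf₀ else 0) +
          (Multiset.filter (fun t' => q (a₁ t')) t).card * mf₀ := Nat.add_le_add hinner ih
      _ ≤ _ := by
          by_cases hq : q (a₁ b) <;> simp [hq, Nat.add_mul, Nat.add_comm]

/-- **Losslessness of (MX)JOIN per-bucket compaction sizes.**
With the key domain partitioned into pairwise disjoint bins `B i` covering
`K`, per-bucket inputs `R₀^(i)`, `R₁^(i)`, and max-frequency upper bounds
`mf₀`, `mf₁`, the total equi-join size is at most the sum of the per-bucket
MF compaction sizes `min (|R₀^(i)|·mf₁, |R₁^(i)|·mf₀)`. -/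
theorem mxjoin_bucket_compaction_lossless
    {α β K : Type*} [DecidableEq K]
    (R₀ : Multiset α) (R₁ : Multiset β) (a₀ : α → K) (a₁ : β → K)
    (m : ℕ) (B : Fin m → Set K)
    (hdisj : ∀ i j, i ≠ j → Disjoint (B i) (B j))
    (hcover : (⋃ i, B i) = Set.univ)
    (mf₀ mf₁ : ℕ)
    (h₀ : ∀ k : K, (R₀.map a₀).count k ≤ mf₀)
    (h₁ : ∀ k : K, (R₁.map a₁).count k ≤ mf₁) :
    ((R₀ ×ˢ R₁).filter (fun st => a₀ st.1 = a₁ st.2)).card ≤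
      ∑ i : Fin m,
        min ((R₀.filter (fun s => a₀ s ∈ B i)).card * mf₁)
            ((R₁.filter (fun t => a₁ t ∈ B i)).card * mf₀) := by
  classical
  have hex : ∀ k : K, ∃ i, k ∈ B i := by
    intro k
    have : k ∈ ⋃ i, B i := hcover ▸ Set.mem_univ k
    simpa using this
  choose idx hidxmem using hex
  have hmem_iff : ∀ k i, k ∈ B i ↔ idx k = i := by
    intro k i
    constructor
    · intro hk
      by_contra h
      exact Set.disjoint_left.mp (hdisj _ _ h) (hidxmem k) hk
    · rintro rfl; exact hidxmem k
  rw [mxjoin_split ((R₀ ×ˢ R₁).filter (fun st => a₀ st.1 = a₁ st.2))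
    (fun st => idx (a₀ st.1))]
  apply Finset.sum_le_sum
  intro i _
  rw [Multiset.filter_filter]
  apply le_min
  · calc ((R₀ ×ˢ R₁).filter
        (fun st => idx (a₀ st.1) = i ∧ a₀ st.1 = a₁ st.2)).card
        = ((R₀ ×ˢ R₁).filter
          (fun st => a₀ st.1 = a₁ st.2 ∧ idx (a₀ st.1) = i)).card := by
          congr 1
          apply Multiset.filter_congr
          intro st _; tauto
      _ ≤ (R₀.filter (fun s => idx (a₀ s) = i)).card * mf₁ :=
          mxjoin_boundA R₀ R₁ a₀ a₁ mf₁ h₁ (fun k => idx k = i)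
      _ = (R₀.filter (fun s => a₀ s ∈ B i)).card * mf₁ := by
          congr 2
          apply Multiset.filter_congr
          intro s _
          exact (hmem_iff (a₀ s) i).symm
  · calc ((R₀ ×ˢ R₁).filter
        (fun st => idx (a₀ st.1) = i ∧ a₀ st.1 = a₁ st.2)).card
        = ((R₀ ×ˢ R₁).filter
          (fun st => a₀ st.1 = a₁ st.2 ∧ idx (a₁ st.2) = i)).card := by
          congr 1
          apply Multiset.filter_congr
          intro st _
          constructor
          · rintro ⟨h1, h2⟩; exact ⟨h2, h2 ▸ h1⟩
          · rintro ⟨h2, h1⟩; exact ⟨h2 ▸ h1, h2⟩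
      _ ≤ (R₁.filter (fun t => idx (a₁ t) = i)).card * mf₀ :=
          mxjoin_boundB R₀ R₁ a₀ a₁ mf₀ h₀ (fun k => idx k = i)
      _ = (R₁.filter (fun t => a₁ t ∈ B i)).card * mf₀ := by
          congr 2
          apply Multiset.filter_congr
          intro t _
          exact (hmem_iff (a₁ t) i).symm
end
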